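/- arXiv:1503.08237 — 13 statements merged into one kernel-verified Lean document; each statement's English description precedes it below -/
import Mathlib

section
/- Suppose there exist powers P_m ∈ [0, P̄_m], P_b ∈ [0, P̄_b] such that r(P_m, P_b) > r_TDD. Then r attains its maximum over [0, P̄_m] × [0, P̄_b] at the point (P̄_m, P̄_b); that is, r(P̄_m, P̄_b) ≥ r(P_m, P_b) for all P_m ∈ [0, P̄_m], P_b ∈ [0, P̄_b]. -/
/-- Core algebraic quasiconvexity fact for the exponentiated one-variable rate. -/
lemma fd_key (a b c d t M : ℝ) (ha : 0 < a) (hb : 0 ≤ b) (hc : 0 < c) (hd : 0 < d)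
    (ht0 : 0 ≤ t) (htM : t ≤ M) :
    (1 + a * t) * (1 + b / (c + d * t)) ≤
      max (1 + b / c) ((1 + a * M) * (1 + b / (c + d * M))) := by
  have hM0 : 0 ≤ M := le_trans ht0 htM
  have hct : 0 < c + d * t := by nlinarith
  have hcM : 0 < c + d * M := by nlinarith
  have e1 : (1 + a * t) * (1 + b / (c + d * t)) = (1 + a * t) * (c + d * t + b) / (c + d * t) := by
    field_simp
  have e2 : (1 + a * M) * (1 + b / (c + d * M)) = (1 + a * M) * (c + d * M + b) / (c + d * M) := by
    field_simp
  have e0 : 1 + b / c = (c + b) / c := by field_simp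
  rcases le_or_gt 0 ((c + b) * (a * c - d) + c * d + a * c * d * (t + M) + a * d ^ 2 * M * t)
    with hQ | hQ
  · -- increasing case: value at t ≤ value at M
    refine le_trans ?_ (le_max_right _ _)
    rw [e1, e2, div_le_div_iff₀ hct hcM]
    nlinarith [mul_nonneg hQ (by linarith : (0:ℝ) ≤ M - t)]
  · -- value at t ≤ value at 0
    have hQ0 : (c + b) * (a * c - d) + c * d + a * c * d * t ≤ 0 := by
      nlinarith [mul_nonneg (mul_nonneg (mul_nonneg ha.le hc.le) hd.le) hM0,
        mul_nonneg (mul_nonneg (mul_nonneg ha.le (sq_nonneg d)) hM0) ht0]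
    refine le_trans ?_ (le_max_left _ _)
    rw [e1, e0, div_le_div_iff₀ hct hc]
    nlinarith [mul_nonneg (neg_nonneg.2 hQ0) ht0]

/-- Log-domain quasiconvexity in one variable. -/
lemma fd_keylog (a b c d t M : ℝ) (ha : 0 < a) (hb : 0 ≤ b) (hc : 0 < c) (hd : 0 < d)
    (ht0 : 0 ≤ t) (htM : t ≤ M) :
    Real.logb 2 (1 + a * t) + Real.logb 2 (1 + b / (c + d * t)) ≤
      max (Real.logb 2 (1 + b / c))
          (Real.logb 2 (1 + a * M) + Real.logb 2 (1 + b / (c + d * M))) := by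
  have hM0 : 0 ≤ M := le_trans ht0 htM
  have hct : 0 < c + d * t := by nlinarith
  have hcM : 0 < c + d * M := by nlinarith
  have h1 : (0:ℝ) < 1 + a * t := by nlinarith
  have h2 : (0:ℝ) < 1 + b / (c + d * t) := by positivity
  have h3 : (0:ℝ) < 1 + a * M := by nlinarith
  have h4 : (0:ℝ) < 1 + b / (c + d * M) := by positivity
  have h5 : (0:ℝ) < 1 + b / c := by positivity
  have hkey := fd_key a b c d t M ha hb hc hd ht0 htM
  have hprod : (0:ℝ) < (1 + a * t) * (1 + b / (c + d * t)) := mul_pos h1 h2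
  rcases le_max_iff.mp hkey with h | h
  · refine le_trans ?_ (le_max_left _ _)
    rw [← Real.logb_mul h1.ne' h2.ne']
    exact Real.logb_le_logb_of_le (by norm_num) hprod h
  · refine le_trans ?_ (le_max_right _ _)
    rw [← Real.logb_mul h1.ne' h2.ne', ← Real.logb_mul h3.ne' h4.ne']
    exact Real.logb_le_logb_of_le (by norm_num) hprod h

/-- Single-channel bidirectional full-duplex link: if some power pair achieves a
full-duplex sum rate exceeding the maximum TDD rate, then the sum rate is
maximized at maximum powers. -/
theorem stmt_0 (hmb hbm gb gm Nb Nm Pm_max Pb_max : ℝ)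
    (hhmb : 0 < hmb) (hhbm : 0 < hbm) (hgb : 0 < gb) (hgm : 0 < gm)
    (hNb : 0 < Nb) (hNm : 0 < Nm) (hPm_max : 0 < Pm_max) (hPb_max : 0 < Pb_max)
    (r : ℝ → ℝ → ℝ)
    (hr : ∀ Pm Pb, r Pm Pb =
      Real.logb 2 (1 + hmb * Pm / (Nb + gb * Pb)) +
      Real.logb 2 (1 + hbm * Pb / (Nm + gm * Pm)))
    (rTDD : ℝ)
    (hrTDD : rTDD = max (Real.logb 2 (1 + hmb * Pm_max / Nb))
                        (Real.logb 2 (1 + hbm * Pb_max / Nm)))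
    (hex : ∃ Pm ∈ Set.Icc (0:ℝ) Pm_max, ∃ Pb ∈ Set.Icc (0:ℝ) Pb_max,
      r Pm Pb > rTDD) :
    ∀ Pm ∈ Set.Icc (0:ℝ) Pm_max, ∀ Pb ∈ Set.Icc (0:ℝ) Pb_max,
      r Pm Pb ≤ r Pm_max Pb_max := by
  -- quasiconvexity in Pm for fixed Pb
  have quasiPm : ∀ Pb ∈ Set.Icc (0:ℝ) Pb_max, ∀ Pm ∈ Set.Icc (0:ℝ) Pm_max,
      r Pm Pb ≤ max (r 0 Pb) (r Pm_max Pb) := by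
    intro Pb hPb Pm hPm
    obtain ⟨hPb0, _⟩ := hPb
    obtain ⟨hPm0, hPmM⟩ := hPm
    have hden : 0 < Nb + gb * Pb := by nlinarith
    have h := fd_keylog (hmb / (Nb + gb * Pb)) (hbm * Pb) Nm gm Pm Pm_max
      (by positivity) (by positivity) hNm hgm hPm0 hPmM
    have ea : ∀ x : ℝ, hmb / (Nb + gb * Pb) * x = hmb * x / (Nb + gb * Pb) := fun x => by ring
    rw [ea, ea] at h
    have e : max (r 0 Pb) (r Pm_max Pb)
        = max (Real.logb 2 (1 + hbm * Pb / Nm))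
            (Real.logb 2 (1 + hmb * Pm_max / (Nb + gb * Pb)) +
              Real.logb 2 (1 + hbm * Pb / (Nm + gm * Pm_max))) := by
      rw [hr, hr]; norm_num
    rw [hr, e]; exact h
  -- quasiconvexity in Pb for fixed Pm
  have quasiPb : ∀ Pm ∈ Set.Icc (0:ℝ) Pm_max, ∀ Pb ∈ Set.Icc (0:ℝ) Pb_max,
      r Pm Pb ≤ max (r Pm 0) (r Pm Pb_max) := by
    intro Pm hPm Pb hPb
    obtain ⟨hPm0, _⟩ := hPm
    obtain ⟨hPb0, hPbM⟩ := hPb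
    have hden : 0 < Nm + gm * Pm := by nlinarith
    have h := fd_keylog (hbm / (Nm + gm * Pm)) (hmb * Pm) Nb gb Pb Pb_max
      (by positivity) (by positivity) hNb hgb hPb0 hPbM
    have ea : ∀ x : ℝ, hbm / (Nm + gm * Pm) * x = hbm * x / (Nm + gm * Pm) := fun x => by ring
    rw [ea, ea] at h
    have e : max (r Pm 0) (r Pm Pb_max)
        = max (Real.logb 2 (1 + hmb * Pm / Nb))
            (Real.logb 2 (1 + hbm * Pb_max / (Nm + gm * Pm)) +
              Real.logb 2 (1 + hmb * Pm / (Nb + gb * Pb_max))) := by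
      rw [hr, hr]; norm_num; ring
    rw [hr, e]
    calc Real.logb 2 (1 + hmb * Pm / (Nb + gb * Pb)) +
          Real.logb 2 (1 + hbm * Pb / (Nm + gm * Pm))
        = Real.logb 2 (1 + hbm * Pb / (Nm + gm * Pm)) +
          Real.logb 2 (1 + hmb * Pm / (Nb + gb * Pb)) := by ring
      _ ≤ _ := h
  -- corner values vs rTDD
  have hm0 : (0:ℝ) ∈ Set.Icc (0:ℝ) Pm_max := ⟨le_refl 0, hPm_max.le⟩
  have hmM : Pm_max ∈ Set.Icc (0:ℝ) Pm_max := ⟨hPm_max.le, le_refl _⟩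
  have hb0 : (0:ℝ) ∈ Set.Icc (0:ℝ) Pb_max := ⟨le_refl 0, hPb_max.le⟩
  have hbM : Pb_max ∈ Set.Icc (0:ℝ) Pb_max := ⟨hPb_max.le, le_refl _⟩
  have hr00 : r 0 0 = 0 := by rw [hr]; norm_num
  have hrM0 : r Pm_max 0 ≤ rTDD := by
    rw [hr, hrTDD]; simp
  have hr0M : r 0 Pb_max ≤ rTDD := by
    rw [hr, hrTDD]; simp
  have hTDD0 : 0 ≤ rTDD := by
    rw [hrTDD]
    refine le_trans ?_ (le_max_left _ _)
    apply Real.logb_nonneg (by norm_num)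
    have : 0 ≤ hmb * Pm_max / Nb := by positivity
    linarith
  -- bound by corners
  have corner : ∀ Pm ∈ Set.Icc (0:ℝ) Pm_max, ∀ Pb ∈ Set.Icc (0:ℝ) Pb_max,
      r Pm Pb ≤ max rTDD (r Pm_max Pb_max) := by
    intro Pm hPm Pb hPb
    have h1 := quasiPm Pb hPb Pm hPm
    have h2 := quasiPb 0 hm0 Pb hPb
    have h3 := quasiPb Pm_max hmM Pb hPb
    have b2 : r 0 Pb ≤ rTDD := by
      rcases le_max_iff.mp h2 with h | h
      · calc r 0 Pb ≤ r 0 0 := h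
          _ = 0 := hr00
          _ ≤ rTDD := hTDD0
      · exact le_trans h hr0M
    have b3 : r Pm_max Pb ≤ max rTDD (r Pm_max Pb_max) := by
      rcases le_max_iff.mp h3 with h | h
      · exact le_trans (le_trans h hrM0) (le_max_left _ _)
      · exact le_trans h (le_max_right _ _)
    rcases le_max_iff.mp h1 with h | h
    · exact le_trans (le_trans h b2) (le_max_left _ _)
    · exact le_trans h b3
  -- the witness forces rTDD < r Pm_max Pb_max
  obtain ⟨Pm0, hPm0, Pb0, hPb0, hgt⟩ := hex
  have hlt : rTDD < r Pm_max Pb_max := by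
    rcases le_max_iff.mp (corner Pm0 hPm0 Pb0 hPb0) with h | h
    · linarith
    · linarith
  intro Pm hPm Pb hPb
  have := corner Pm hPm Pb hPb
  rcases le_max_iff.mp this with h | h
  · linarith
  · exact h
end

section
/- Fix P_b ≥ 0 and suppose h_mb·N_m/(N_b + g_b·P_b) ≥ g_m. Then the function P_m ↦ γ(P_m, P_b) is strictly increasing and concave on [0, ∞). -/
/-- If h_mb·N_m/(N_b + g_b·P_b) ≥ g_m for a fixed P_b ≥ 0, then
γ(·, P_b) is strictly increasing and concave on [0, ∞). -/
theorem stmt_1 (hmb hbm gb gm Nb Nm Pb : ℝ)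
    (hhmb : 0 < hmb) (hhbm : 0 < hbm) (hgb : 0 < gb) (hgm : 0 < gm)
    (hNb : 0 < Nb) (hNm : 0 < Nm) (hPb : 0 ≤ Pb)
    (γ : ℝ → ℝ → ℝ)
    (hγ : ∀ pm pb, γ pm pb =
      hmb * pm / (Nb + gb * pb) + hbm * pb / (Nm + gm * pm) +
      (hmb * pm / (Nb + gb * pb)) * (hbm * pb / (Nm + gm * pm)))
    (hcond : hmb * Nm / (Nb + gb * Pb) ≥ gm) :
    StrictMonoOn (fun pm => γ pm Pb) (Set.Ici 0) ∧
    ConcaveOn ℝ (Set.Ici 0) (fun pm => γ pm Pb) := by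
  set D := Nb + gb * Pb with hDdef
  have hD : 0 < D := by positivity
  have hcond' : gm * D ≤ hmb * Nm := by
    rw [ge_iff_le, le_div_iff₀ hD] at hcond
    linarith
  set α := hmb / D with hαdef
  have hα : 0 < α := by positivity
  set C := hbm * Pb * hmb / (D * gm) with hCdef
  set K := hbm * Pb * (gm * D - hmb * Nm) / (gm * D) with hKdef
  have hK : K ≤ 0 := by
    apply div_nonpos_of_nonpos_of_nonneg
    · apply mul_nonpos_of_nonneg_of_nonpos
      · positivity
      · linarith
    · positivity
  -- key decomposition on [0, ∞)
  have key : ∀ p : ℝ, 0 ≤ p → γ p Pb = α * p + C + K / (Nm + gm * p) := by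
    intro p hp
    have hEp : (0:ℝ) < Nm + gm * p := by positivity
    rw [hγ, hαdef, hCdef, hKdef]
    field_simp
    ring
  constructor
  · intro x hx y hy hxy
    simp only [Set.mem_Ici] at hx hy
    have hEx : (0:ℝ) < Nm + gm * x := by positivity
    have hEy : (0:ℝ) < Nm + gm * y := by positivity
    have hdiff : γ y Pb - γ x Pb
        = α * (y - x) + (-K) * gm * (y - x) / ((Nm + gm * x) * (Nm + gm * y)) := by
      rw [key x hx, key y hy]
      field_simp
      ring
    have h1 : 0 < α * (y - x) := by
      apply mul_pos hα; linarith
    have h2 : 0 ≤ (-K) * gm * (y - x) / ((Nm + gm * x) * (Nm + gm * y)) := by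
      apply div_nonneg
      · apply mul_nonneg (mul_nonneg (by linarith) hgm.le) (by linarith)
      · positivity
    simp only
    linarith
  · refine ⟨convex_Ici 0, fun x hx y hy a b ha hb hab => ?_⟩
    simp only [Set.mem_Ici] at hx hy
    have hz : 0 ≤ a * x + b * y := by positivity
    have hEx : (0:ℝ) < Nm + gm * x := by positivity
    have hEy : (0:ℝ) < Nm + gm * y := by positivity
    have hEz : (0:ℝ) < Nm + gm * (a * x + b * y) := by positivity
    simp only [smul_eq_mul]
    rw [key x hx, key y hy, key _ hz]
    have hb' : b = 1 - a := by linarith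
    subst hb'
    have hdiff : (α * (a * x + (1 - a) * y) + C + K / (Nm + gm * (a * x + (1 - a) * y)))
        - (a * (α * x + C + K / (Nm + gm * x)) + (1 - a) * (α * y + C + K / (Nm + gm * y)))
        = (-K) * (a * (1 - a) * (gm * x - gm * y) ^ 2)
            / ((Nm + gm * x) * (Nm + gm * y) * (Nm + gm * (a * x + (1 - a) * y))) := by
      field_simp
      ring
    have h2 : 0 ≤ (-K) * (a * (1 - a) * (gm * x - gm * y) ^ 2)
            / ((Nm + gm * x) * (Nm + gm * y) * (Nm + gm * (a * x + (1 - a) * y))) := by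
      apply div_nonneg
      · apply mul_nonneg (by linarith)
        apply mul_nonneg (mul_nonneg ha (by linarith)) (sq_nonneg _)
      · positivity
    linarith
end

section
/- Fix P_b > 0 and suppose h_mb·N_m/(N_b + g_b·P_b) < g_m. Then the function P_m ↦ γ(P_m, P_b) is strictly convex on [0, ∞); consequently, for any P̄_m > 0 its maximum over [0, P̄_m] is attained at P_m = 0 or at P_m = P̄_m. -/
/-!
Write `A = a·P_m` and `B = k / (N_m + g_m·P_m)` with `a = h_mb/(N_b + g_b·P_b)` and
`k = h_bm·P_b`. Then `γ = A + (1 + A)·B`, and the partial fraction decomposition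
`(1 + a x)·k/(N + g x) = k a/g + k (g - a N)/g / (N + g x)` exhibits `γ` as an affine function
plus a positive multiple of `1/(N_m + g_m·P_m)` exactly when `a N_m < g_m`.
On `[0, P̄_m]` a convex function is bounded by the larger of its endpoint values.
-/

open Set

lemma StrictConvexOn.const_mul {E : Type*} [AddCommGroup E] [Module ℝ E] {s : Set E}
    {f : E → ℝ} {c : ℝ} (hc : 0 < c) (hf : StrictConvexOn ℝ s f) :
    StrictConvexOn ℝ s fun x => c * f x := by
  refine ⟨hf.1, fun x hx y hy hxy a b ha hb hab => ?_⟩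
  have h := mul_lt_mul_of_pos_left (hf.2 hx hy hxy ha hb hab) hc
  simp only [smul_eq_mul] at h ⊢
  linarith

lemma StrictConvexOn.comp_add_mul {s : Set ℝ} {f : ℝ → ℝ} {N g : ℝ} (hg : g ≠ 0)
    (hf : StrictConvexOn ℝ s f) :
    StrictConvexOn ℝ ((fun x => N + g * x) ⁻¹' s) fun x => f (N + g * x) := by
  have hcomb : ∀ x y a b : ℝ, a + b = 1 →
      N + g * (a • x + b • y) = a • (N + g * x) + b • (N + g * y) := by
    intro x y a b hab
    simp only [smul_eq_mul]
    linear_combination (-N) * hab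
  refine ⟨fun x hx y hy a b ha hb hab => ?_, fun x hx y hy hxy a b ha hb hab => ?_⟩
  · change N + g * (a • x + b • y) ∈ s
    rw [hcomb x y a b hab]
    exact hf.1 hx hy ha hb hab
  · have hne : N + g * x ≠ N + g * y := by simpa [hg] using hxy
    change f (N + g * (a • x + b • y)) < a • f (N + g * x) + b • f (N + g * y)
    rw [hcomb x y a b hab]
    exact hf.2 hx hy hne ha hb hab

lemma strictConvexOn_div_add_mul {d N g : ℝ} (hd : 0 < d) (hg : g ≠ 0) :
    StrictConvexOn ℝ ((fun x => N + g * x) ⁻¹' Ioi 0) fun x => d / (N + g * x) := by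
  have hinv : StrictConvexOn ℝ (Ioi 0) fun y : ℝ => d * y ^ (-1 : ℤ) :=
    (strictConvexOn_zpow (by decide) (by decide)).const_mul hd
  simpa only [zpow_neg_one, div_eq_mul_inv] using hinv.comp_add_mul (N := N) hg

lemma one_add_mul_mul_div_eq {a k N g x : ℝ} (hg : g ≠ 0) (hx : N + g * x ≠ 0) :
    (1 + a * x) * (k / (N + g * x)) = k * (g - a * N) / g / (N + g * x) + k * a / g := by
  rw [div_div, div_add_div _ _ (mul_ne_zero hg hx) hg, mul_div_assoc',
    div_eq_div_iff hx (mul_ne_zero (mul_ne_zero hg hx) hg)]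
  ring

lemma strictConvexOn_one_add_mul_mul_div {a k N g : ℝ} (hk : 0 < k) (hN : 0 < N) (hg : 0 < g)
    (haN : a * N < g) :
    StrictConvexOn ℝ (Ici 0) fun x => (1 + a * x) * (k / (N + g * x)) := by
  have hpos : ∀ x ∈ Ici (0 : ℝ), 0 < N + g * x := fun x hx =>
    add_pos_of_pos_of_nonneg hN (mul_nonneg hg.le hx)
  have hd : 0 < k * (g - a * N) / g := div_pos (mul_pos hk (by linarith)) hg
  refine (((strictConvexOn_div_add_mul hd hg.ne').subset hpos (convex_Ici 0)).add_const
    (k * a / g)).congr fun x hx => ?_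
  exact (one_add_mul_mul_div_eq hg.ne' (hpos x hx).ne').symm

theorem stmt_2_general (hmb hbm gb gm Nb Nm Pb : ℝ)
    (hhbm : 0 < hbm) (hgm : 0 < gm)
    (hNm : 0 < Nm) (hPb : 0 < Pb)
    (γ : ℝ → ℝ → ℝ)
    (hγ : ∀ pm pb, γ pm pb =
      hmb * pm / (Nb + gb * pb) + hbm * pb / (Nm + gm * pm) +
      (hmb * pm / (Nb + gb * pb)) * (hbm * pb / (Nm + gm * pm)))
    (hcond : hmb * Nm / (Nb + gb * Pb) < gm) :
    StrictConvexOn ℝ (Set.Ici 0) (fun pm => γ pm Pb) ∧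
    ∀ Pm_max : ℝ, 0 < Pm_max → ∀ Pm ∈ Set.Icc (0:ℝ) Pm_max,
      γ Pm Pb ≤ max (γ 0 Pb) (γ Pm_max Pb) := by
  set a := hmb / (Nb + gb * Pb)
  have hγ_eq : (fun pm => γ pm Pb) =
      fun pm => a * pm + (1 + a * pm) * (hbm * Pb / (Nm + gm * pm)) := by
    funext pm
    rw [hγ, mul_div_right_comm]
    ring
  have haN : a * Nm < gm := by rwa [div_mul_eq_mul_div]
  have hconvex : StrictConvexOn ℝ (Ici 0) fun pm => γ pm Pb := by
    rw [hγ_eq]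
    exact ((LinearMap.mul ℝ ℝ a).convexOn (convex_Ici 0)).add_strictConvexOn
      (strictConvexOn_one_add_mul_mul_div (mul_pos hhbm hPb) hNm hgm haN)
  exact ⟨hconvex, fun Pm_max hPm_max Pm hPm =>
    hconvex.convexOn.le_max_of_mem_Icc (mem_Ici.2 le_rfl) hPm_max.le hPm⟩

/-- If h_mb·N_m/(N_b + g_b·P_b) < g_m for a fixed P_b > 0, then γ(·, P_b) is
strictly convex on [0, ∞), hence its maximum over [0, P̄_m] is attained at an
endpoint. -/
theorem stmt_2 (hmb hbm gb gm Nb Nm Pb : ℝ)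
    (hhmb : 0 < hmb) (hhbm : 0 < hbm) (hgb : 0 < gb) (hgm : 0 < gm)
    (hNb : 0 < Nb) (hNm : 0 < Nm) (hPb : 0 < Pb)
    (γ : ℝ → ℝ → ℝ)
    (hγ : ∀ pm pb, γ pm pb =
      hmb * pm / (Nb + gb * pb) + hbm * pb / (Nm + gm * pm) +
      (hmb * pm / (Nb + gb * pb)) * (hbm * pb / (Nm + gm * pm)))
    (hcond : hmb * Nm / (Nb + gb * Pb) < gm) :
    StrictConvexOn ℝ (Set.Ici 0) (fun pm => γ pm Pb) ∧
    ∀ Pm_max : ℝ, 0 < Pm_max → ∀ Pm ∈ Set.Icc (0:ℝ) Pm_max,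
      γ Pm Pb ≤ max (γ 0 Pb) (γ Pm_max Pb) :=
  stmt_2_general hmb hbm gb gm Nb Nm Pb hhbm hgm hNm hPb γ hγ hcond
end

section
/- If g_m/N_m ≤ h_mb/(N_b + g_b·P_b) for a fixed P_b ≥ 0, then the function P_m ↦ r(P_m, P_b) is strictly concave and strictly increasing on [0, ∞). Symmetrically, if g_b/N_b ≤ h_bm/(N_m + g_m·P_m) for a fixed P_m ≥ 0, then the function P_b ↦ r(P_m, P_b) is strictly concave and strictly increasing on [0, ∞). -/
/-!
With `P_b` fixed, the sum rate in `x = P_m` is, up to the factor `1 / log 2`,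
`log (1 + (a / B) x) + log (1 + k / (d + c x))` where `a = h_mb`, `B = N_b + g_b P_b`, `c = g_m`,
`d = N_m` and `k = h_bm P_b ≥ 0` (symmetrically in `P_b`). Regroup it as
`log (d + k + c x) + (log (1 + (a / B) x) - log (d + c x))`. The first summand is strictly
concave and strictly increasing. The bracket has derivative
`(a d / B - c) / ((1 + (a / B) x) (d + c x))`, whose numerator is nonnegative exactly under the
hypothesis `c / d ≤ a / B` and whose denominator increases, so the bracket is concave and
nondecreasing.
-/

open Real Set

section LogAffine

variable {a b c d x : ℝ}

lemma hasDerivAt_log_add_mul (hx : b + a * x ≠ 0) :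
    HasDerivAt (fun y => log (b + a * y)) (a / (b + a * x)) x := by
  have h := ((hasDerivAt_id x).const_mul a).const_add b
  simp only [id, mul_one] at h
  exact h.log hx

lemma strictMonoOn_log_add_mul (hb : 0 < b) (ha : 0 < a) :
    StrictMonoOn (fun x => log (b + a * x)) (Ici 0) := by
  intro x (hx : 0 ≤ x) y _ hxy
  exact log_lt_log (by positivity) (by gcongr)

lemma strictConcaveOn_log_add_mul (hb : 0 < b) (ha : 0 < a) :
    StrictConcaveOn ℝ (Ici 0) fun x => log (b + a * x) := by
  have hderiv : ∀ x : ℝ, 0 ≤ x →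
      HasDerivAt (fun y => log (b + a * y)) (a / (b + a * x)) x :=
    fun x hx => hasDerivAt_log_add_mul (by positivity)
  refine StrictAntiOn.strictConcaveOn_of_deriv (convex_Ici 0)
    (fun x hx => (hderiv x hx).continuousAt.continuousWithinAt) ?_
  rw [interior_Ici]
  intro x (hx : 0 < x) y (hy : 0 < y) hxy
  rw [(hderiv x hx.le).deriv, (hderiv y hy.le).deriv]
  exact div_lt_div_of_pos_left ha (by positivity) (by gcongr)

lemma hasDerivAt_log_add_mul_sub_log_add_mul (hb : 0 < b) (hd : 0 < d) (ha : 0 ≤ a)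
    (hc : 0 ≤ c) (hx : 0 ≤ x) :
    HasDerivAt (fun y => log (b + a * y) - log (d + c * y))
      ((a * d - b * c) / ((b + a * x) * (d + c * x))) x := by
  have hbx : 0 < b + a * x := by positivity
  have hdx : 0 < d + c * x := by positivity
  refine ((hasDerivAt_log_add_mul hbx.ne').sub
    (hasDerivAt_log_add_mul hdx.ne')).congr_deriv ?_
  field_simp
  ring

lemma monotoneOn_log_add_mul_sub_log_add_mul (hb : 0 < b) (hd : 0 < d) (ha : 0 ≤ a)
    (hc : 0 ≤ c) (h : c / d ≤ a / b) :
    MonotoneOn (fun x => log (b + a * x) - log (d + c * x)) (Ici 0) := by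
  have hderiv := fun x (hx : x ∈ Ici (0 : ℝ)) =>
    hasDerivAt_log_add_mul_sub_log_add_mul hb hd ha hc (x := x) hx
  refine monotoneOn_of_deriv_nonneg (convex_Ici 0)
    (fun x hx => (hderiv x hx).continuousAt.continuousWithinAt)
    (fun x hx => (hderiv x (interior_subset hx)).differentiableAt.differentiableWithinAt) ?_
  intro x hx
  rw [(hderiv x (interior_subset hx)).deriv]
  have hx : (0 : ℝ) ≤ x := interior_subset hx
  have hcross := (div_le_div_iff₀ hd hb).1 h
  exact div_nonneg (by linarith) (by positivity)

lemma concaveOn_log_add_mul_sub_log_add_mul (hb : 0 < b) (hd : 0 < d) (ha : 0 ≤ a)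
    (hc : 0 ≤ c) (h : c / d ≤ a / b) :
    ConcaveOn ℝ (Ici 0) fun x => log (b + a * x) - log (d + c * x) := by
  have hderiv := fun x (hx : x ∈ Ici (0 : ℝ)) =>
    hasDerivAt_log_add_mul_sub_log_add_mul hb hd ha hc (x := x) hx
  refine AntitoneOn.concaveOn_of_deriv (convex_Ici 0)
    (fun x hx => (hderiv x hx).continuousAt.continuousWithinAt)
    (fun x hx => (hderiv x (interior_subset hx)).differentiableAt.differentiableWithinAt) ?_
  rw [interior_Ici]
  intro x (hx : 0 < x) y (hy : 0 < y) hxy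
  rw [(hderiv x hx.le).deriv, (hderiv y hy.le).deriv]
  have hcross := (div_le_div_iff₀ hd hb).1 h
  exact div_le_div_of_nonneg_left (by linarith) (by positivity) (by gcongr)

end LogAffine

lemma StrictConcaveOn.div_const {s : Set ℝ} {f : ℝ → ℝ} (hf : StrictConcaveOn ℝ s f)
    {c : ℝ} (hc : 0 < c) : StrictConcaveOn ℝ s fun x => f x / c := by
  refine ⟨hf.1, fun x hx y hy hxy p q hp hq hpq => ?_⟩
  simp only [smul_eq_mul] at hf ⊢
  calc p * (f x / c) + q * (f y / c) = (p * f x + q * f y) / c := by ring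
    _ < f (p * x + q * y) / c := div_lt_div_of_pos_right (hf.2 hx hy hxy hp hq hpq) hc

section SumRate

variable {a B c d k : ℝ}

lemma sumRate_eqOn (hc : 0 ≤ c) (hd : 0 < d) (hk : 0 ≤ k) :
    EqOn (fun x => logb 2 (1 + a * x / B) + logb 2 (1 + k / (d + c * x)))
      (fun x => (log (d + k + c * x) + (log (1 + a / B * x) - log (d + c * x))) / log 2)
      (Ici 0) := by
  intro x (hx : 0 ≤ x)
  have hdx : 0 < d + c * x := by positivity
  have hkx : 0 < d + k + c * x := by positivity
  have hrate : 1 + k / (d + c * x) = (d + k + c * x) / (d + c * x) := by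
    field_simp
    ring
  simp only [logb, hrate, log_div hkx.ne' hdx.ne', mul_div_right_comm a x B]
  ring

lemma strictConcaveOn_sumRate (ha : 0 ≤ a) (hB : 0 < B) (hc : 0 < c) (hd : 0 < d) (hk : 0 ≤ k)
    (h : c / d ≤ a / B) :
    StrictConcaveOn ℝ (Ici 0) fun x => logb 2 (1 + a * x / B) + logb 2 (1 + k / (d + c * x)) :=
  (((strictConcaveOn_log_add_mul (by positivity : 0 < d + k) hc).add_concaveOn
    (concaveOn_log_add_mul_sub_log_add_mul one_pos hd (by positivity) hc.le
      (by rwa [div_one] : c / d ≤ a / B / 1))).div_const (log_pos one_lt_two)).congr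
    (sumRate_eqOn hc.le hd hk).symm

lemma strictMonoOn_sumRate (ha : 0 ≤ a) (hB : 0 < B) (hc : 0 < c) (hd : 0 < d) (hk : 0 ≤ k)
    (h : c / d ≤ a / B) :
    StrictMonoOn (fun x => logb 2 (1 + a * x / B) + logb 2 (1 + k / (d + c * x))) (Ici 0) := by
  have hsum := (strictMonoOn_log_add_mul (by positivity : 0 < d + k) hc).add_monotone
    (monotoneOn_log_add_mul_sub_log_add_mul one_pos hd (by positivity) hc.le
      (by rwa [div_one] : c / d ≤ a / B / 1))
  refine StrictMonoOn.congr (fun x hx y hy hxy => ?_) (sumRate_eqOn hc.le hd hk).symm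
  exact div_lt_div_of_pos_right (hsum hx hy hxy) (log_pos one_lt_two)

end SumRate

/-- Sufficient conditions for the full-duplex sum rate to be strictly concave
and strictly increasing in each transmission power separately. -/
theorem stmt_4 (hmb hbm gb gm Nb Nm : ℝ)
    (hhmb : 0 < hmb) (hhbm : 0 < hbm) (hgb : 0 < gb) (hgm : 0 < gm)
    (hNb : 0 < Nb) (hNm : 0 < Nm)
    (r : ℝ → ℝ → ℝ)
    (hr : ∀ Pm Pb, r Pm Pb =
      Real.logb 2 (1 + hmb * Pm / (Nb + gb * Pb)) +
      Real.logb 2 (1 + hbm * Pb / (Nm + gm * Pm))) :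
    (∀ Pb : ℝ, 0 ≤ Pb → gm / Nm ≤ hmb / (Nb + gb * Pb) →
      StrictConcaveOn ℝ (Set.Ici 0) (fun pm => r pm Pb) ∧
      StrictMonoOn (fun pm => r pm Pb) (Set.Ici 0)) ∧
    (∀ Pm : ℝ, 0 ≤ Pm → gb / Nb ≤ hbm / (Nm + gm * Pm) →
      StrictConcaveOn ℝ (Set.Ici 0) (fun pb => r Pm pb) ∧
      StrictMonoOn (fun pb => r Pm pb) (Set.Ici 0)) := by
  have hr_fst : ∀ Pb, (fun pm => r pm Pb) = fun x =>
      logb 2 (1 + hmb * x / (Nb + gb * Pb)) + logb 2 (1 + hbm * Pb / (Nm + gm * x)) :=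
    fun Pb => funext fun x => hr x Pb
  have hr_snd : ∀ Pm, (fun pb => r Pm pb) = fun x =>
      logb 2 (1 + hbm * x / (Nm + gm * Pm)) + logb 2 (1 + hmb * Pm / (Nb + gb * x)) :=
    fun Pm => funext fun x => (hr Pm x).trans (add_comm _ _)
  refine ⟨fun Pb hPb h => ?_, fun Pm hPm h => ?_⟩
  · have hB : 0 < Nb + gb * Pb := by positivity
    have hk : 0 ≤ hbm * Pb := by positivity
    rw [hr_fst]
    exact ⟨strictConcaveOn_sumRate hhmb.le hB hgm hNm hk h,
      strictMonoOn_sumRate hhmb.le hB hgm hNm hk h⟩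
  · have hB : 0 < Nm + gm * Pm := by positivity
    have hk : 0 ≤ hmb * Pm := by positivity
    rw [hr_snd]
    exact ⟨strictConcaveOn_sumRate hhbm.le hB hgb hNb hk h,
      strictMonoOn_sumRate hhbm.le hB hgb hNb hk h⟩
end

section
/- Let P_m ∈ [0, P̄_m] and P_b ∈ [0, P̄_b], and set γ_mm = g_m·P_m/N_m, γ_mb = h_mb·P_m/N_b, γ_bb = g_b·P_b/N_b, γ_bm = h_bm·P_b/N_m. If either γ_mm > γ_mb/(1 + γ_bb) or γ_bb > γ_bm/(1 + γ_mm), then r(P_m, P_b) − r_TDD < 1; i.e., when Condition 1 fails, full-duplex cannot gain more than 1 b/s/Hz over the maximum TDD rate. -/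
set_option maxHeartbeats 1000000 in
/-- When Condition 1 fails, full-duplex cannot gain more than 1 b/s/Hz over
the maximum TDD rate. -/
theorem stmt_5 (hmb hbm gb gm Nb Nm Pm_max Pb_max : ℝ)
    (hhmb : 0 < hmb) (hhbm : 0 < hbm) (hgb : 0 < gb) (hgm : 0 < gm)
    (hNb : 0 < Nb) (hNm : 0 < Nm) (hPm_max : 0 < Pm_max) (hPb_max : 0 < Pb_max)
    (r : ℝ → ℝ → ℝ)
    (hr : ∀ Pm Pb, r Pm Pb =
      Real.logb 2 (1 + hmb * Pm / (Nb + gb * Pb)) +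
      Real.logb 2 (1 + hbm * Pb / (Nm + gm * Pm)))
    (rTDD : ℝ)
    (hrTDD : rTDD = max (Real.logb 2 (1 + hmb * Pm_max / Nb))
                        (Real.logb 2 (1 + hbm * Pb_max / Nm)))
    (Pm Pb : ℝ) (hPm : Pm ∈ Set.Icc (0:ℝ) Pm_max) (hPb : Pb ∈ Set.Icc (0:ℝ) Pb_max)
    (γmm γmb γbb γbm : ℝ)
    (hγmm : γmm = gm * Pm / Nm) (hγmb : γmb = hmb * Pm / Nb)
    (hγbb : γbb = gb * Pb / Nb) (hγbm : γbm = hbm * Pb / Nm)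
    (hfail : γmm > γmb / (1 + γbb) ∨ γbb > γbm / (1 + γmm)) :
    r Pm Pb - rTDD < 1 := by
  obtain ⟨hPm0, hPm1⟩ := hPm
  obtain ⟨hPb0, hPb1⟩ := hPb
  set A := hmb * Pm / (Nb + gb * Pb) with hA
  set B := hbm * Pb / (Nm + gm * Pm) with hB
  have hDb : 0 < Nb + gb * Pb := by positivity
  have hDm : 0 < Nm + gm * Pm := by positivity
  have hA0 : 0 ≤ A := by positivity
  have hB0 : 0 ≤ B := by positivity
  -- rewrite the failure conditions
  have hAeq : γmb / (1 + γbb) = A := by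
    rw [hγmb, hγbb, hA, div_eq_div_iff (by positivity) hDb.ne']
    field_simp
  have hBeq : γbm / (1 + γmm) = B := by
    rw [hγbm, hγmm, hB, div_eq_div_iff (by positivity) hDm.ne']
    field_simp
  set M1 := hmb * Pm_max / Nb with hM1
  set M2 := hbm * Pb_max / Nm with hM2
  set M := max M1 M2 with hM
  have hM1pos : 0 < M1 := by rw [hM1]; positivity
  have hM2pos : 0 < M2 := by rw [hM2]; positivity
  have hMpos : 0 < M := lt_of_lt_of_le hM1pos (le_max_left _ _)
  -- bounds A ≤ γmb ≤ M, B ≤ γbm ≤ M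
  have hγmbM : γmb ≤ M := by
    refine le_trans ?_ (le_max_left M1 M2)
    rw [hγmb, hM1, div_le_div_iff₀ hNb hNb]
    nlinarith [mul_pos hhmb hNb, hPm1]
  have hγbmM : γbm ≤ M := by
    refine le_trans ?_ (le_max_right M1 M2)
    rw [hγbm, hM2, div_le_div_iff₀ hNm hNm]
    nlinarith [mul_pos hhbm hNm, hPb1]
  have hAγ : A ≤ γmb := by
    rw [hA, hγmb, div_le_div_iff₀ hDb hNb]
    nlinarith [mul_nonneg (mul_nonneg hhmb.le hPm0) (mul_nonneg hgb.le hPb0)]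
  have hBγ : B ≤ γbm := by
    rw [hB, hγbm, div_le_div_iff₀ hDm hNm]
    nlinarith [mul_nonneg (mul_nonneg hhbm.le hPb0) (mul_nonneg hgm.le hPm0)]
  -- key product bound
  have hkey : (1 + A) * (1 + B) < 2 * (1 + M) := by
    rcases hfail with hc | hc
    · rw [hAeq] at hc
      rw [hγmm] at hc
      have hANm : A * Nm < gm * Pm := by
        rw [gt_iff_lt, lt_div_iff₀ hNm] at hc
        linarith
      have h1 : (1 + A) * B ≤ γbm := by
        rw [hB, hγbm, show (1 + A) * (hbm * Pb / (Nm + gm * Pm)) =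
          ((1 + A) * (hbm * Pb)) / (Nm + gm * Pm) from by ring,
          div_le_div_iff₀ hDm hNm]
        nlinarith [mul_nonneg hhbm.le hPb0]
      nlinarith
    · rw [hBeq] at hc
      rw [hγbb] at hc
      have hBNb : B * Nb < gb * Pb := by
        rw [gt_iff_lt, lt_div_iff₀ hNb] at hc
        linarith
      have h1 : (1 + B) * A ≤ γmb := by
        rw [hA, hγmb, show (1 + B) * (hmb * Pm / (Nb + gb * Pb)) =
          ((1 + B) * (hmb * Pm)) / (Nb + gb * Pb) from by ring,
          div_le_div_iff₀ hDb hNb]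
        nlinarith [mul_nonneg hhmb.le hPm0]
      nlinarith
  -- express rTDD as logb of max
  have hrT : rTDD = Real.logb 2 (1 + M) := by
    rw [hrTDD, hM]
    rcases le_total M1 M2 with h | h
    · rw [max_eq_right h, max_eq_right]
      exact Real.logb_le_logb_of_le (by norm_num) (by linarith) (by linarith)
    · rw [max_eq_left h, max_eq_left]
      exact Real.logb_le_logb_of_le (by norm_num) (by linarith) (by linarith)
  have hrsum : r Pm Pb = Real.logb 2 ((1 + A) * (1 + B)) := by
    rw [hr, Real.logb_mul (by positivity) (by positivity)]
  rw [hrsum, hrT, sub_lt_iff_lt_add]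
  have h2 : (1 : ℝ) = Real.logb 2 2 := (Real.logb_self_eq_one (by norm_num)).symm
  calc Real.logb 2 ((1 + A) * (1 + B)) < Real.logb 2 ((1 + M) * 2) := by
        apply Real.logb_lt_logb (by norm_num) (by positivity)
        linarith
    _ = 1 + Real.logb 2 (1 + M) := by
        rw [Real.logb_mul (by positivity) (by norm_num), h2]
        ring
end

section
/- Suppose there exist powers P_{m1} ∈ [0, P̄_m], P_b ∈ [0, P̄_b] such that r(P_{m1}, P_b) > r_TDD. Then r attains its maximum over [0, P̄_m] × [0, P̄_b] at (P̄_m, P̄_b); that is, r(P̄_m, P̄_b) ≥ r(P_{m1}, P_b) for all P_{m1} ∈ [0, P̄_m], P_b ∈ [0, P̄_b]. -/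
/-- Key algebraic quasiconvexity fact: a function of the form
`(n+C+m*y)*(c+d*y)/(n+m*y)` on `[0,Y]` is bounded by its endpoint values. -/
lemma keyQ (n m C c d y Y : ℝ) (hn : 0 < n) (hm : 0 < m) (hC : 0 < C)
    (hc : 0 < c) (hd : 0 < d) (hy : 0 ≤ y) (hyY : y ≤ Y) :
    (n+C+m*y)*(c+d*y)/(n+m*y) ≤
      max ((n+C)*c/n) ((n+C+m*Y)*(c+d*Y)/(n+m*Y)) := by
  have hY : 0 ≤ Y := hy.trans hyY
  have d1 : 0 < n + m*y := by nlinarith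
  have d2 : 0 < n + m*Y := by nlinarith
  by_contra hcon
  push_neg at hcon
  have h1 : (n+C)*c/n < (n+C+m*y)*(c+d*y)/(n+m*y) :=
    lt_of_le_of_lt (le_max_left _ _) hcon
  have h2 : (n+C+m*Y)*(c+d*Y)/(n+m*Y) < (n+C+m*y)*(c+d*y)/(n+m*y) :=
    lt_of_le_of_lt (le_max_right _ _) hcon
  rw [div_lt_div_iff₀ hn d1] at h1
  rw [div_lt_div_iff₀ d2 d1] at h2
  -- h1 : (n+C)*c*(n+m*y) < (n+C+m*y)*(c+d*y)*n
  -- h2 : (n+C+m*Y)*(c+d*Y)*(n+m*y) < (n+C+m*y)*(c+d*y)*(n+m*Y)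
  have hy0 : 0 < y := by
    rcases hy.eq_or_lt with h | h
    · subst h; nlinarith
    · exact h
  have hA : C*c*m < d*n*(n+C+m*y) := by nlinarith [mul_pos hy0 (mul_pos hd hn)]
  have hyY' : y < Y := by
    rcases hyY.eq_or_lt with h | h
    · subst h; exact absurd h2 (lt_irrefl _)
    · exact h
  have hB : d*(n+m*y)*(n+m*Y) < C*(c*m - d*n) := by
    nlinarith [mul_pos (sub_pos.mpr hyY') (mul_pos d1 d2)]
  nlinarith [mul_nonneg (mul_nonneg hd.le d1.le) (mul_nonneg hm.le hY)]

/-- Edge lemma: along an edge of the power box, the sum rate is bounded by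
its values at the two endpoints. -/
lemma edge1 (C d n m c0 Y : ℝ) (hC : 0 < C) (hd : 0 < d) (hn : 0 < n)
    (hm : 0 < m) (hc0 : 0 < c0) (u : ℝ) (hu : 0 ≤ u) (huY : u ≤ Y) :
    Real.logb 2 (1 + C/(n+m*u)) + Real.logb 2 (1 + d*u/c0) ≤
      max (Real.logb 2 (1 + C/n))
          (Real.logb 2 (1 + C/(n+m*Y)) + Real.logb 2 (1 + d*Y/c0)) := by
  have hY : 0 ≤ Y := hu.trans huY
  have d1 : 0 < n + m*u := by nlinarith
  have d2 : 0 < n + m*Y := by nlinarith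
  have e1 : 1 + C/(n+m*u) = (n+C+m*u)/(n+m*u) := by field_simp <;> ring
  have e2 : 1 + d*u/c0 = (c0+d*u)/c0 := by field_simp
  have e3 : 1 + C/(n+m*Y) = (n+C+m*Y)/(n+m*Y) := by field_simp <;> ring
  have e4 : 1 + d*Y/c0 = (c0+d*Y)/c0 := by field_simp
  have e5 : 1 + C/n = (n+C)/n := by field_simp <;> ring
  have pnum1 : 0 < n+C+m*u := by nlinarith
  have pnum2 : 0 < c0+d*u := by nlinarith
  have pnum3 : 0 < n+C+m*Y := by nlinarith
  have pnum4 : 0 < c0+d*Y := by nlinarith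
  rw [e1, e2, e3, e4, e5]
  rw [← Real.logb_mul (by positivity) (by positivity),
      ← Real.logb_mul (by positivity) (by positivity)]
  have key := keyQ n m C c0 d u Y hn hm hC hc0 hd hu huY
  have hdivL : (n+C+m*u)/(n+m*u) * ((c0+d*u)/c0) =
      ((n+C+m*u)*(c0+d*u)/(n+m*u))/c0 := by
    field_simp <;> ring
  have hdivR : (n+C+m*Y)/(n+m*Y) * ((c0+d*Y)/c0) =
      ((n+C+m*Y)*(c0+d*Y)/(n+m*Y))/c0 := by
    field_simp <;> ring
  rw [hdivL, hdivR]
  rcases le_max_iff.mp key with h | h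
  · -- bounded by left endpoint value
    refine le_max_of_le_left ?_
    have : (n+C+m*u)*(c0+d*u)/(n+m*u)/c0 ≤ (n+C)/n := by
      rw [div_le_iff₀ hc0]
      calc (n+C+m*u)*(c0+d*u)/(n+m*u) ≤ (n+C)*c0/n := h
        _ = (n+C)/n*c0 := by ring
    exact Real.logb_le_logb_of_le (by norm_num) (by positivity) this
  · refine le_max_of_le_right ?_
    have : (n+C+m*u)*(c0+d*u)/(n+m*u)/c0 ≤
        (n+C+m*Y)*(c0+d*Y)/(n+m*Y)/c0 := by gcongr
    exact Real.logb_le_logb_of_le (by norm_num) (by positivity) this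

/-- Swapped-order version of `edge1`. -/
lemma edge2 (C d n m c0 Y : ℝ) (hC : 0 < C) (hd : 0 < d) (hn : 0 < n)
    (hm : 0 < m) (hc0 : 0 < c0) (u : ℝ) (hu : 0 ≤ u) (huY : u ≤ Y) :
    Real.logb 2 (1 + d*u/c0) + Real.logb 2 (1 + C/(n+m*u)) ≤
      max (Real.logb 2 (1 + C/n))
          (Real.logb 2 (1 + d*Y/c0) + Real.logb 2 (1 + C/(n+m*Y))) := by
  rw [add_comm, add_comm (Real.logb 2 (1 + d*Y/c0))]
  exact edge1 C d n m c0 Y hC hd hn hm hc0 u hu huY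

/-- Scaling monotonicity of a single rate term. -/
lemma termScale (N p q t1 t2 : ℝ) (hN : 0 < N) (hp : 0 ≤ p) (hq : 0 ≤ q)
    (ht1 : 0 ≤ t1) (ht : t1 ≤ t2) :
    Real.logb 2 (1 + p*t1/(N+q*t1)) ≤ Real.logb 2 (1 + p*t2/(N+q*t2)) := by
  have ht2 : 0 ≤ t2 := ht1.trans ht
  have d1 : 0 < N + q*t1 := by nlinarith
  have d2 : 0 < N + q*t2 := by nlinarith
  have harg : 1 + p*t1/(N+q*t1) ≤ 1 + p*t2/(N+q*t2) := by
    have : p*t1/(N+q*t1) ≤ p*t2/(N+q*t2) := by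
      rw [div_le_div_iff₀ d1 d2]
      nlinarith [mul_nonneg (mul_nonneg hp hN.le) (sub_nonneg.mpr ht)]
    linarith
  exact Real.logb_le_logb_of_le (by norm_num) (by positivity) harg



/-- Two unidirectional links: if some power pair achieves a full-duplex sum
rate exceeding the maximum TDD rate, then the sum rate is maximized at maximum
powers. -/
theorem stmt_6 (hm1b hbm2 hm1m2 gb Nb Nm2 Pm_max Pb_max : ℝ)
    (hhm1b : 0 < hm1b) (hhbm2 : 0 < hbm2) (hhm1m2 : 0 < hm1m2) (hgb : 0 < gb)
    (hNb : 0 < Nb) (hNm2 : 0 < Nm2) (hPm_max : 0 < Pm_max) (hPb_max : 0 < Pb_max)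
    (r : ℝ → ℝ → ℝ)
    (hr : ∀ Pm1 Pb, r Pm1 Pb =
      Real.logb 2 (1 + hm1b * Pm1 / (Nb + gb * Pb)) +
      Real.logb 2 (1 + hbm2 * Pb / (Nm2 + hm1m2 * Pm1)))
    (rTDD : ℝ)
    (hrTDD : rTDD = max (Real.logb 2 (1 + hm1b * Pm_max / Nb))
                        (Real.logb 2 (1 + hbm2 * Pb_max / Nm2)))
    (hex : ∃ Pm1 ∈ Set.Icc (0:ℝ) Pm_max, ∃ Pb ∈ Set.Icc (0:ℝ) Pb_max,
      r Pm1 Pb > rTDD) :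
    ∀ Pm1 ∈ Set.Icc (0:ℝ) Pm_max, ∀ Pb ∈ Set.Icc (0:ℝ) Pb_max,
      r Pm1 Pb ≤ r Pm_max Pb_max := by
  have hTDD1 : Real.logb 2 (1 + hm1b * Pm_max / Nb) ≤ rTDD := by
    rw [hrTDD]; exact le_max_left _ _
  have hTDD2 : Real.logb 2 (1 + hbm2 * Pb_max / Nm2) ≤ rTDD := by
    rw [hrTDD]; exact le_max_right _ _
  have master : ∀ x ∈ Set.Icc (0:ℝ) Pm_max, ∀ y ∈ Set.Icc (0:ℝ) Pb_max,
      r x y ≤ max (r Pm_max Pb_max) rTDD := by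
    intro x hx y hy
    obtain ⟨hx0, hxX⟩ := hx
    obtain ⟨hy0, hyY⟩ := hy
    rcases eq_or_lt_of_le hx0 with hx0' | hxpos
    · -- x = 0
      have hle : r x y ≤ rTDD := by
        rw [hr, ← hx0']
        have e : (1:ℝ) + hm1b * 0 / (Nb + gb * y) = 1 := by
          rw [mul_zero, zero_div, add_zero]
        have e2 : Nm2 + hm1m2 * 0 = Nm2 := by ring
        rw [e, Real.logb_one, zero_add, e2]
        calc Real.logb 2 (1 + hbm2 * y / Nm2)
            ≤ Real.logb 2 (1 + hbm2 * Pb_max / Nm2) := by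
              apply Real.logb_le_logb_of_le (by norm_num) (by positivity)
              gcongr
          _ ≤ rTDD := hTDD2
      exact hle.trans (le_max_right _ _)
    rcases eq_or_lt_of_le hy0 with hy0' | hypos
    · -- y = 0
      have hle : r x y ≤ rTDD := by
        rw [hr, ← hy0']
        have e : (1:ℝ) + hbm2 * 0 / (Nm2 + hm1m2 * x) = 1 := by
          rw [mul_zero, zero_div, add_zero]
        have e2 : Nb + gb * 0 = Nb := by ring
        rw [e, Real.logb_one, add_zero, e2]
        calc Real.logb 2 (1 + hm1b * x / Nb)
            ≤ Real.logb 2 (1 + hm1b * Pm_max / Nb) := by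
              apply Real.logb_le_logb_of_le (by norm_num) (by positivity)
              gcongr
          _ ≤ rTDD := hTDD1
      exact hle.trans (le_max_right _ _)
    -- x > 0 and y > 0 : scale up to the boundary
    set s := min (Pm_max / x) (Pb_max / y) with hs
    have hs1 : 1 ≤ Pm_max / x := (one_le_div hxpos).mpr hxX
    have hs2 : 1 ≤ Pb_max / y := (one_le_div hypos).mpr hyY
    have hs_ge : 1 ≤ s := le_min hs1 hs2
    have hs0 : 0 ≤ s := zero_le_one.trans hs_ge
    have hsx : s * x ≤ Pm_max := by
      have h := mul_le_mul_of_nonneg_right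
        (min_le_left (Pm_max / x) (Pb_max / y)) hxpos.le
      rw [div_mul_cancel₀ _ hxpos.ne'] at h
      rw [hs]; exact h
    have hsy : s * y ≤ Pb_max := by
      have h := mul_le_mul_of_nonneg_right
        (min_le_right (Pm_max / x) (Pb_max / y)) hypos.le
      rw [div_mul_cancel₀ _ hypos.ne'] at h
      rw [hs]; exact h
    have hsx0 : 0 ≤ s * x := mul_nonneg hs0 hx0
    have hsy0 : 0 ≤ s * y := mul_nonneg hs0 hy0
    have hscale : r x y ≤ r (s*x) (s*y) := by
      rw [hr x y, hr (s*x) (s*y)]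
      have A1 : Real.logb 2 (1 + hm1b * x / (Nb + gb * y)) ≤
          Real.logb 2 (1 + hm1b * (s*x) / (Nb + gb * (s*y))) := by
        have t := termScale Nb (hm1b*x) (gb*y) 1 s hNb (by positivity)
          (by positivity) zero_le_one hs_ge
        have e1 : 1 + hm1b * x * 1 / (Nb + gb * y * 1) =
            1 + hm1b * x / (Nb + gb * y) := by ring
        have e2 : 1 + hm1b * x * s / (Nb + gb * y * s) =
            1 + hm1b * (s*x) / (Nb + gb * (s*y)) := by ring
        rwa [e1, e2] at t
      have A2 : Real.logb 2 (1 + hbm2 * y / (Nm2 + hm1m2 * x)) ≤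
          Real.logb 2 (1 + hbm2 * (s*y) / (Nm2 + hm1m2 * (s*x))) := by
        have t := termScale Nm2 (hbm2*y) (hm1m2*x) 1 s hNm2 (by positivity)
          (by positivity) zero_le_one hs_ge
        have e1 : 1 + hbm2 * y * 1 / (Nm2 + hm1m2 * x * 1) =
            1 + hbm2 * y / (Nm2 + hm1m2 * x) := by ring
        have e2 : 1 + hbm2 * y * s / (Nm2 + hm1m2 * x * s) =
            1 + hbm2 * (s*y) / (Nm2 + hm1m2 * (s*x)) := by ring
        rwa [e1, e2] at t
      linarith
    rcases min_cases (Pm_max / x) (Pb_max / y) with ⟨hmin, _⟩ | ⟨hmin, _⟩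
    · -- s * x = Pm_max : edge x = Pm_max
      have hsxX : s * x = Pm_max := by
        rw [hs, hmin, div_mul_cancel₀ _ hxpos.ne']
      rw [hsxX] at hscale
      have hedge := edge1 (hm1b*Pm_max) hbm2 Nb gb (Nm2 + hm1m2*Pm_max) Pb_max
        (by positivity) hhbm2 hNb hgb (by positivity) (s*y) hsy0 hsy
      rw [← hr Pm_max (s*y), ← hr Pm_max Pb_max] at hedge
      calc r x y ≤ r Pm_max (s*y) := hscale
        _ ≤ max (Real.logb 2 (1 + hm1b * Pm_max / Nb)) (r Pm_max Pb_max) := hedge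
        _ ≤ max (r Pm_max Pb_max) rTDD :=
            max_le (hTDD1.trans (le_max_right _ _)) (le_max_left _ _)
    · -- s * y = Pb_max : edge y = Pb_max
      have hsyY : s * y = Pb_max := by
        rw [hs, hmin, div_mul_cancel₀ _ hypos.ne']
      rw [hsyY] at hscale
      have hedge := edge2 (hbm2*Pb_max) hm1b Nm2 hm1m2 (Nb + gb*Pb_max) Pm_max
        (by positivity) hhm1b hNm2 hhm1m2 (by positivity) (s*x) hsx0 hsx
      rw [← hr (s*x) Pb_max, ← hr Pm_max Pb_max] at hedge
      calc r x y ≤ r (s*x) Pb_max := hscale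
        _ ≤ max (Real.logb 2 (1 + hbm2 * Pb_max / Nm2)) (r Pm_max Pb_max) := hedge
        _ ≤ max (r Pm_max Pb_max) rTDD :=
            max_le (hTDD2.trans (le_max_right _ _)) (le_max_left _ _)
  obtain ⟨w1, hw1, w2, hw2, hw⟩ := hex
  have hwle := master w1 hw1 w2 hw2
  have hXY : rTDD ≤ r Pm_max Pb_max := by
    rcases le_max_iff.mp hwle with h | h
    · linarith
    · linarith
  intro x hx y hy
  rcases le_max_iff.mp (master x hx y hy) with h | h
  · exact h
  · linarith
end

section
/- Assume Q := s_b/log₂(1 + γ_bm2) + s_m/log₂(1 + γ_m1b) ≥ 1, and let p* = Q − 1. Then p* is the minimum of the set {p ≥ 0 : (s_b/(1+p), s_m/(1+p)) ∈ T}; that is, in the two-unidirectional-links use case, full-duplex extends the TDD capacity region by exactly p*·100%. -/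
/-- Capacity region extension for two unidirectional links: if Q ≥ 1 then
p* = Q − 1 is the smallest p ≥ 0 with (s_b/(1+p), s_m/(1+p)) in the TDD
capacity region. -/
theorem stmt_7 (γm1b γbm2 γbb γm1m2 : ℝ)
    (hγm1b : 0 < γm1b) (hγbm2 : 0 < γbm2) (hγbb : 0 ≤ γbb) (hγm1m2 : 0 ≤ γm1m2)
    (sb sm : ℝ)
    (hsb : sb = Real.logb 2 (1 + γbm2 / (1 + γm1m2)))
    (hsm : sm = Real.logb 2 (1 + γm1b / (1 + γbb)))
    (T : Set (ℝ × ℝ))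
    (hT : T = {q : ℝ × ℝ | 0 ≤ q.1 ∧ 0 ≤ q.2 ∧
      q.1 / Real.logb 2 (1 + γbm2) + q.2 / Real.logb 2 (1 + γm1b) ≤ 1})
    (Q : ℝ)
    (hQ : Q = sb / Real.logb 2 (1 + γbm2) + sm / Real.logb 2 (1 + γm1b))
    (hQ1 : 1 ≤ Q) :
    IsLeast {p : ℝ | 0 ≤ p ∧ (sb / (1 + p), sm / (1 + p)) ∈ T} (Q - 1) := by
  have hQpos : 0 < Q := lt_of_lt_of_le one_pos hQ1
  have hsb0 : 0 ≤ sb := by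
    rw [hsb]
    apply Real.logb_nonneg (by norm_num)
    have : 0 ≤ γbm2 / (1 + γm1m2) := by positivity
    linarith
  have hsm0 : 0 ≤ sm := by
    rw [hsm]
    apply Real.logb_nonneg (by norm_num)
    have : 0 ≤ γm1b / (1 + γbb) := by positivity
    linarith
  subst hT
  constructor
  · refine ⟨by linarith, ?_, ?_, ?_⟩
    · have : 0 < 1 + (Q - 1) := by linarith
      positivity
    · have : 0 < 1 + (Q - 1) := by linarith
      positivity
    · have h1 : (1 : ℝ) + (Q - 1) = Q := by ring
      rw [h1]
      have : sb / Q / Real.logb 2 (1 + γbm2) + sm / Q / Real.logb 2 (1 + γm1b)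
          = (sb / Real.logb 2 (1 + γbm2) + sm / Real.logb 2 (1 + γm1b)) / Q := by
        ring
      rw [this, ← hQ, div_self hQpos.ne']
  · rintro p ⟨hp0, _, _, hsum⟩
    have hp1 : 0 < 1 + p := by linarith
    have : sb / (1 + p) / Real.logb 2 (1 + γbm2) + sm / (1 + p) / Real.logb 2 (1 + γm1b)
        = Q / (1 + p) := by rw [hQ]; ring
    rw [this, div_le_one hp1] at hsum
    linarith
end

section
/- For every k ∈ {1,…,K}, every a_k ≥ 0, γ_k ≥ 0, and every c ∈ ℝ with |k − c| ≥ 1, the per-channel derivative satisfies |f_k′(c)| ≤ (2/ln 2)·(1/|k − c|). -/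
/-!
With `d = k - c` and `u = a d² ≥ 0`, the derivative equals
`2 a γ d / ((1 + u) (1 + u + γ)) / ln 2`, and `|d| · |2 a γ d| = 2 u γ ≤ 2 (1 + u)(1 + u + γ)`
because every other term of the expanded product is nonnegative.
-/

open Real

lemma hasDerivAt_logb_one_add_div_one_add_mul_sq {a γ : ℝ} (ha : 0 ≤ a) (hγ : 0 ≤ γ)
    (t c : ℝ) :
    HasDerivAt (fun x => logb 2 (1 + γ / (1 + a * (t - x) ^ 2)))
      (2 * a * γ * (t - c) / ((1 + a * (t - c) ^ 2) * (1 + a * (t - c) ^ 2 + γ)) / log 2) c := by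
  have hden : 0 < 1 + a * (t - c) ^ 2 := by positivity
  have hsq : HasDerivAt (fun x => 1 + a * (t - x) ^ 2) (a * (2 * (t - c) * -1)) c := by
    simpa using (((hasDerivAt_id c).const_sub t).pow 2).const_mul a |>.const_add 1
  have hlog : HasDerivAt (fun x => log (1 + γ / (1 + a * (t - x) ^ 2)) / log 2) _ c :=
    (((hasDerivAt_const c γ).div hsq hden.ne').const_add 1).log
      (by positivity : 1 + γ / (1 + a * (t - c) ^ 2) ≠ 0) |>.div_const (log 2)
  refine hlog.congr_deriv ?_
  simp only [Pi.div_apply]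
  field_simp
  ring

lemma abs_two_mul_div_le_two_div_abs {a γ : ℝ} (ha : 0 ≤ a) (hγ : 0 ≤ γ) (d : ℝ) :
    |2 * a * γ * d / ((1 + a * d ^ 2) * (1 + a * d ^ 2 + γ))| ≤ 2 / |d| := by
  rcases eq_or_ne d 0 with rfl | hd
  · simp
  have hden : 0 < (1 + a * d ^ 2) * (1 + a * d ^ 2 + γ) := by positivity
  rw [abs_div, abs_of_pos hden, abs_mul, abs_of_nonneg (by positivity : 0 ≤ 2 * a * γ),
    div_le_div_iff₀ hden (abs_pos.mpr hd), mul_assoc, ← sq, sq_abs]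
  have hu : 0 ≤ a * d ^ 2 := by positivity
  nlinarith [mul_nonneg hu hu, mul_nonneg hu hγ]

theorem stmt_11_general (k : ℕ)
    (ak γk : ℝ) (hak : 0 ≤ ak) (hγk : 0 ≤ γk)
    (f : ℝ → ℝ)
    (hf : ∀ c : ℝ, f c = Real.logb 2 (1 + γk / (1 + ak * ((k : ℝ) - c) ^ 2))) :
    ∀ c : ℝ, 1 ≤ |(k : ℝ) - c| →
      |deriv f c| ≤ (2 / Real.log 2) * (1 / |(k : ℝ) - c|) := by
  intro c _
  rw [funext hf, (hasDerivAt_logb_one_add_div_one_add_mul_sq hak hγk k c).deriv, abs_div,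
    abs_of_pos (log_pos one_lt_two)]
  calc _ ≤ 2 / |(k : ℝ) - c| / log 2 := by
        gcongr
        exact abs_two_mul_div_le_two_div_abs hak hγk _
    _ = _ := by ring

/-- For every channel k and every c with |k − c| ≥ 1, the per-channel
derivative satisfies |f_k′(c)| ≤ (2/ln 2)·(1/|k − c|). -/
theorem stmt_11 (K : ℕ) (hK : 1 ≤ K) (k : ℕ) (hk : k ∈ Finset.Icc 1 K)
    (ak γk : ℝ) (hak : 0 ≤ ak) (hγk : 0 ≤ γk)
    (f : ℝ → ℝ)
    (hf : ∀ c : ℝ, f c = Real.logb 2 (1 + γk / (1 + ak * ((k : ℝ) - c) ^ 2))) :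
    ∀ c : ℝ, 1 ≤ |(k : ℝ) - c| →
      |deriv f c| ≤ (2 / Real.log 2) * (1 / |(k : ℝ) - c|) :=
  stmt_11_general k ak γk hak hγk f hf
end

section
/- Fix a channel k and the canceller position c ∈ ℝ. If g_m·(k − c)²/N_m ≤ h_mb,k/(N_b + g_b·P_{b,k}), then the function P_{m,k} ↦ r_k(P_{m,k}, P_{b,k}) is concave on [0, ∞) for the fixed P_{b,k}; and if g_b/N_b ≤ h_bm,k/(N_m + g_m·P_{m,k}·(k − c)²), then the function P_{b,k} ↦ r_k(P_{m,k}, P_{b,k}) is concave on [0, ∞) for the fixed P_{m,k}. If both inequalities hold, r_k is biconcave in (P_{m,k}, P_{b,k}). -/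
open Real Set

lemma concaveOn_congr' {s : Set ℝ} {f g : ℝ → ℝ} (h : ConcaveOn ℝ s f)
    (he : ∀ x ∈ s, f x = g x) : ConcaveOn ℝ s g :=
  ⟨h.1, fun x hx y hy a b ha hb hab => by
    rw [← he _ (h.1 hx hy ha hb hab), ← he x hx, ← he y hy]
    exact h.2 hx hy ha hb hab⟩

lemma logAffine (A B : ℝ) (hA : 0 < A) (hB : 0 ≤ B) :
    ConcaveOn ℝ (Ici 0) (fun x => Real.log (A + B * x)) := by
  refine ⟨convex_Ici 0, fun x hx y hy a b ha hb hab => ?_⟩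
  have hx0 : (0:ℝ) ≤ x := hx
  have hy0 : (0:ℝ) ≤ y := hy
  have h1 : (0:ℝ) < A + B * x := by positivity
  have h2 : (0:ℝ) < A + B * y := by positivity
  have key := strictConcaveOn_log_Ioi.concaveOn.2 (mem_Ioi.2 h1) (mem_Ioi.2 h2) ha hb hab
  simp only [smul_eq_mul] at key ⊢
  have heq : A + B * (a * x + b * y) = a * (A + B * x) + b * (A + B * y) := by
    nlinarith [hab]
  rw [heq]
  exact key

lemma mobiusConcave (α β γ : ℝ) (hα : 0 < α) (hβ : 0 < β) (hγ : 0 ≤ γ)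
    (hc : γ ≤ α * β) :
    ConcaveOn ℝ (Ici 0) (fun x => (1 + α * x) / (β + γ * x)) := by
  refine ⟨convex_Ici 0, fun x hx y hy a b ha hb hab => ?_⟩
  have hx0 : (0:ℝ) ≤ x := hx
  have hy0 : (0:ℝ) ≤ y := hy
  have Dx : (0:ℝ) < β + γ * x := by positivity
  have Dy : (0:ℝ) < β + γ * y := by positivity
  have Dz : (0:ℝ) < β + γ * (a * x + b * y) := by positivity
  simp only [smul_eq_mul]
  rw [← mul_div_assoc, ← mul_div_assoc, div_add_div _ _ Dx.ne' Dy.ne',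
    div_le_div_iff₀ (by positivity) Dz]
  have hb' : b = 1 - a := by linarith
  subst hb'
  nlinarith [mul_nonneg (mul_nonneg (mul_nonneg ha hb) (mul_nonneg hγ (sub_nonneg.2 hc)))
    (sq_nonneg (x - y))]

lemma logComp {s : Set ℝ} {u : ℝ → ℝ} (hu : ConcaveOn ℝ s u)
    (hpos : ∀ x ∈ s, 0 < u x) : ConcaveOn ℝ s (fun x => Real.log (u x)) := by
  refine ⟨hu.1, fun x hx y hy a b ha hb hab => ?_⟩
  have hux := hpos x hx
  have huy := hpos y hy
  have hcomb : 0 < a * u x + b * u y := by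
    rcases eq_or_lt_of_le ha with h | h
    · have hb1 : b = 1 := by linarith
      rw [← h, hb1]; simpa using huy
    · have : 0 < a * u x := mul_pos h hux
      nlinarith [mul_nonneg hb huy.le]
  have key := strictConcaveOn_log_Ioi.concaveOn.2 (mem_Ioi.2 hux) (mem_Ioi.2 huy) ha hb hab
  simp only [smul_eq_mul] at key ⊢
  calc a * Real.log (u x) + b * Real.log (u y) ≤ Real.log (a * u x + b * u y) := key
    _ ≤ Real.log (u (a • x + b • y)) := by
        apply Real.log_le_log hcomb
        have := hu.2 hx hy ha hb hab
        simpa using this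

lemma master (α β γ δ ε : ℝ) (hα : 0 < α) (hβ : 0 < β) (hγ : 0 ≤ γ)
    (hδ : 0 < δ) (hε : 0 ≤ ε) (hc : γ ≤ α * β) :
    ConcaveOn ℝ (Ici 0) (fun x =>
      Real.logb 2 ((1 + α * x) / (β + γ * x)) + Real.logb 2 (δ + ε * x)) := by
  have h1 : ConcaveOn ℝ (Ici 0) (fun x => Real.log ((1 + α * x) / (β + γ * x))) := by
    apply logComp (mobiusConcave α β γ hα hβ hγ hc)
    intro x hx
    have hx0 : (0:ℝ) ≤ x := hx
    positivity
  have h2 : ConcaveOn ℝ (Ici 0) (fun x => Real.log (δ + ε * x)) := logAffine δ ε hδ hε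
  have h3 := (h1.add h2).smul (c := (Real.log 2)⁻¹)
    (by positivity)
  refine concaveOn_congr' h3 (fun x hx => ?_)
  simp only [Pi.smul_apply, Pi.add_apply, smul_eq_mul, Real.logb]
  ring

/-- Per-channel biconcavity conditions in the multi-channel case: each
inequality implies concavity of the channel rate r_k in the corresponding
power variable (the other one fixed). -/
theorem stmt_13 (hmbk hbmk gb gm Nb Nm : ℝ)
    (hhmbk : 0 < hmbk) (hhbmk : 0 < hbmk) (hgb : 0 < gb) (hgm : 0 < gm)
    (hNb : 0 < Nb) (hNm : 0 < Nm) (k : ℤ) (c : ℝ)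
    (rk : ℝ → ℝ → ℝ)
    (hrk : ∀ Pm Pb, rk Pm Pb =
      Real.logb 2 (1 + hmbk * Pm / (Nb + gb * Pb)) +
      Real.logb 2 (1 + hbmk * Pb / (Nm + gm * ((k : ℝ) - c) ^ 2 * Pm)))
    (Pmk Pbk : ℝ) (hPmk : 0 ≤ Pmk) (hPbk : 0 ≤ Pbk) :
    (gm * ((k : ℝ) - c) ^ 2 / Nm ≤ hmbk / (Nb + gb * Pbk) →
      ConcaveOn ℝ (Set.Ici 0) (fun pm => rk pm Pbk)) ∧
    (gb / Nb ≤ hbmk / (Nm + gm * Pmk * ((k : ℝ) - c) ^ 2) →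
      ConcaveOn ℝ (Set.Ici 0) (fun pb => rk Pmk pb)) := by
  set d : ℝ := gm * ((k : ℝ) - c) ^ 2 with hd
  have hd0 : 0 ≤ d := by positivity
  constructor
  · intro hcond
    have hDB : (0:ℝ) < Nb + gb * Pbk := by positivity
    set a : ℝ := hmbk / (Nb + gb * Pbk) with ha
    have ha0 : 0 < a := by positivity
    have hc : d ≤ a * Nm := by
      rw [div_le_div_iff₀ hNm hDB] at hcond
      rw [ha, div_mul_eq_mul_div, le_div_iff₀ hDB]
      linarith
    have hBq : (0:ℝ) ≤ hbmk * Pbk := by positivity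
    have hM := master a Nm d (Nm + hbmk * Pbk) d ha0 hNm hd0 (by positivity) hd0 hc
    refine concaveOn_congr' hM (fun pm hpm => ?_)
    have hpm0 : (0:ℝ) ≤ pm := hpm
    have hD : (0:ℝ) < Nm + d * pm := by positivity
    have h1 : (0:ℝ) < 1 + a * pm := by positivity
    rw [hrk]
    have e1 : hmbk * pm / (Nb + gb * Pbk) = a * pm := by
      rw [ha]; ring
    have e2 : 1 + hbmk * Pbk / (Nm + gm * ((k : ℝ) - c) ^ 2 * pm)
        = (Nm + hbmk * Pbk + d * pm) / (Nm + d * pm) := by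
      rw [hd]; field_simp; ring
    rw [e1, e2, Real.logb_div h1.ne' hD.ne',
      Real.logb_div (by positivity) hD.ne']
    ring
  · intro hcond
    have hD' : (0:ℝ) < Nm + d * Pmk := by positivity
    set a : ℝ := hbmk / (Nm + d * Pmk) with ha
    have ha0 : 0 < a := by positivity
    have hcond' : gb / Nb ≤ hbmk / (Nm + d * Pmk) := by
      have : Nm + gm * Pmk * ((k : ℝ) - c) ^ 2 = Nm + d * Pmk := by rw [hd]; ring
      rwa [this] at hcond
    have hc : gb ≤ a * Nb := by
      rw [div_le_div_iff₀ hNb hD'] at hcond'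
      rw [ha, div_mul_eq_mul_div, le_div_iff₀ hD']
      linarith
    have hA : (0:ℝ) ≤ hmbk * Pmk := by positivity
    have hM := master a Nb gb (Nb + hmbk * Pmk) gb ha0 hNb hgb.le (by positivity) hgb.le hc
    refine concaveOn_congr' hM (fun pb hpb => ?_)
    have hpb0 : (0:ℝ) ≤ pb := hpb
    have hDb : (0:ℝ) < Nb + gb * pb := by positivity
    have h1 : (0:ℝ) < 1 + a * pb := by positivity
    rw [hrk]
    have e1 : 1 + hbmk * pb / (Nm + gm * ((k : ℝ) - c) ^ 2 * Pmk) = 1 + a * pb := by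
      rw [ha, hd]; ring_nf
    have e2 : 1 + hmbk * Pmk / (Nb + gb * pb)
        = (Nb + hmbk * Pmk + gb * pb) / (Nb + gb * pb) := by
      field_simp; ring
    have hNA : (0:ℝ) < Nb + hmbk * Pmk + gb * pb := by positivity
    rw [e1, e2, Real.logb_div h1.ne' hDb.ne', Real.logb_div hNA.ne' hDb.ne']
    ring
end

section
/- Fix c ∈ ℝ and any positive mobile-station powers P_{m,k} > 0 for k ∈ {1,…,K}. Over the feasible set {(P_{b,1},…,P_{b,K}) : P_{b,k} > 0 for all k, Σ_{k=1}^K P_{b,k} ≤ P̄_b}, the high-SINR sum rate r_H is uniquely maximized by the equal allocation P_{b,k} = P̄_b/K for every k. -/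
/-!
Up to a constant independent of `P_b`, the rate is `(∑ k, φ (P_{b,k})) / log 2` with
`φ x = log x - log (N_b + g_b x)`. Its derivative `N_b / (x (N_b + g_b x))` is positive and strictly
decreasing, so `φ` is strictly increasing and strictly concave. By Jensen,
`∑ k, φ (P_{b,k}) ≤ K φ(mean) ≤ K φ(P̄_b / K)`, and equality in both steps forces every `P_{b,k}`
to equal the mean and the mean to equal `P̄_b / K`.
-/

open Real Finset

section LogRatio

variable {a b : ℝ}

theorem hasDerivAt_log_sub_log_affine {x : ℝ} (hx : x ≠ 0) (hbx : b + a * x ≠ 0) :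
    HasDerivAt (fun y => log y - log (b + a * y)) (b / (x * (b + a * x))) x := by
  have hlin : HasDerivAt (fun y => b + a * y) a x := by
    simpa using ((hasDerivAt_id x).const_mul a).const_add b
  refine ((hasDerivAt_log hx).sub (hlin.log hbx)).congr_deriv ?_
  rw [inv_eq_one_div, div_sub_div _ _ hx hbx]
  ring

variable (ha : 0 ≤ a) (hb : 0 < b)
include ha hb

theorem deriv_log_sub_log_affine {x : ℝ} (hx : 0 < x) :
    deriv (fun y => log y - log (b + a * y)) x = b / (x * (b + a * x)) :=
  (hasDerivAt_log_sub_log_affine hx.ne' (by positivity)).deriv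

theorem continuousOn_log_sub_log_affine :
    ContinuousOn (fun y => log y - log (b + a * y)) (Set.Ioi 0) := fun x (hx : 0 < x) =>
  (hasDerivAt_log_sub_log_affine hx.ne' (by positivity)).continuousAt.continuousWithinAt

theorem strictMonoOn_log_sub_log_affine :
    StrictMonoOn (fun y => log y - log (b + a * y)) (Set.Ioi 0) := by
  refine strictMonoOn_of_deriv_pos (convex_Ioi 0) (continuousOn_log_sub_log_affine ha hb) ?_
  rw [interior_Ioi]
  intro x (hx : 0 < x)
  rw [deriv_log_sub_log_affine ha hb hx]
  positivity

theorem strictConcaveOn_log_sub_log_affine :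
    StrictConcaveOn ℝ (Set.Ioi 0) (fun y => log y - log (b + a * y)) := by
  refine StrictAntiOn.strictConcaveOn_of_deriv (convex_Ioi 0)
    (continuousOn_log_sub_log_affine ha hb) ?_
  rw [interior_Ioi]
  intro x (hx : 0 < x) y (hy : 0 < y) hxy
  rw [deriv_log_sub_log_affine ha hb hx, deriv_log_sub_log_affine ha hb hy]
  refine div_lt_div_of_pos_left hb (by positivity) ?_
  nlinarith [mul_le_mul_of_nonneg_left hxy.le ha]

end LogRatio

theorem StrictConcaveOn.sum_lt_card_mul_of_sum_le {ι : Type*} {s : Finset ι} {D : Set ℝ}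
    {f : ℝ → ℝ} (hf : StrictConcaveOn ℝ D f) (hmono : StrictMonoOn f D) {x : ι → ℝ} {a : ℝ}
    (hx : ∀ i ∈ s, x i ∈ D) (ha : a ∈ D) (hsum : ∑ i ∈ s, x i ≤ #s * a)
    (hne : ∃ i ∈ s, x i ≠ a) :
    ∑ i ∈ s, f (x i) < #s * f a := by
  obtain ⟨i₀, hi₀, hxi₀⟩ := hne
  have hn : (0 : ℝ) < #s := by exact_mod_cast card_pos.mpr ⟨i₀, hi₀⟩
  have hw : ∑ _i ∈ s, (#s : ℝ)⁻¹ = 1 := by simp [hn.ne']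
  set m := ∑ i ∈ s, (#s : ℝ)⁻¹ • x i with hm
  have hmD : m ∈ D := hf.1.sum_mem (fun _ _ => by positivity) hw hx
  have hma : m ≤ a := by
    rw [hm, ← smul_sum, smul_eq_mul, inv_mul_le_iff₀ hn]
    exact hsum
  suffices ∑ i ∈ s, (#s : ℝ)⁻¹ • f (x i) < f a by
    rwa [← smul_sum, smul_eq_mul, inv_mul_lt_iff₀ hn] at this
  by_cases hspread : ∃ j ∈ s, x j ≠ m
  · calc ∑ i ∈ s, (#s : ℝ)⁻¹ • f (x i) < f m :=
          (hf.lt_map_sum_iff_of_pos' (fun _ _ => by positivity) hw hx).mpr hspread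
      _ ≤ f a := hmono.monotoneOn hmD ha hma
  · push Not at hspread
    have hma' : m < a := hma.lt_of_ne (hspread i₀ hi₀ ▸ hxi₀)
    calc ∑ i ∈ s, (#s : ℝ)⁻¹ • f (x i) = ∑ _i ∈ s, (#s : ℝ)⁻¹ • f m :=
          sum_congr rfl fun i hi => by rw [hspread i hi]
      _ = f m := by rw [← sum_smul, hw, one_smul]
      _ < f a := hmono hmD ha hma'

theorem logb_div_add_logb_mul_div {b α β d x y : ℝ} (hα : α ≠ 0) (hβ : β ≠ 0) (hd : d ≠ 0)
    (hx : x ≠ 0) (hy : y ≠ 0) :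
    logb b (α / y) + logb b (β * x / d) = logb b (α * β / d) + (log x - log y) / log b := by
  simp only [logb, log_div hα hy, log_div (mul_ne_zero hβ hx) hd, log_div (mul_ne_zero hα hβ) hd,
    log_mul hβ hx, log_mul hα hβ]
  ring

/-- High-SINR regime: for any fixed mobile-station powers and canceller
position, the equal base-station power allocation P_{b,k} = P̄_b/K uniquely
maximizes the high-SINR sum rate over the feasible set. -/
theorem stmt_14 (K : ℕ) (hK : 1 ≤ K) (c : ℝ)
    (hmb hbm : ℕ → ℝ)
    (hhmb : ∀ k ∈ Finset.Icc 1 K, 0 < hmb k)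
    (hhbm : ∀ k ∈ Finset.Icc 1 K, 0 < hbm k)
    (gb gm Nb Nm Pb_max : ℝ)
    (hgb : 0 < gb) (hgm : 0 < gm) (hNb : 0 < Nb) (hNm : 0 < Nm)
    (hPb_max : 0 < Pb_max)
    (Pm : ℕ → ℝ) (hPm : ∀ k ∈ Finset.Icc 1 K, 0 < Pm k)
    (rH : (ℕ → ℝ) → ℝ)
    (hrH : ∀ Pb : ℕ → ℝ, rH Pb = ∑ k ∈ Finset.Icc 1 K,
      (Real.logb 2 (hmb k * Pm k / (Nb + gb * Pb k)) +
       Real.logb 2 (hbm k * Pb k / (Nm + gm * ((k : ℝ) - c) ^ 2 * Pm k)))) :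
    ∀ Pb : ℕ → ℝ, (∀ k ∈ Finset.Icc 1 K, 0 < Pb k) →
      (∑ k ∈ Finset.Icc 1 K, Pb k) ≤ Pb_max →
      (∃ k ∈ Finset.Icc 1 K, Pb k ≠ Pb_max / K) →
      rH Pb < rH (fun _ => Pb_max / K) := by
  intro Pb hPb hsum hne
  set g : ℝ → ℝ := fun x => log x - log (Nb + gb * x)
  have hsplit : ∀ P : ℕ → ℝ, (∀ k ∈ Icc 1 K, 0 < P k) → rH P =
      ∑ k ∈ Icc 1 K, logb 2 (hmb k * Pm k * hbm k / (Nm + gm * ((k : ℝ) - c) ^ 2 * Pm k)) +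
        (∑ k ∈ Icc 1 K, g (P k)) / log 2 := by
    intro P hP
    rw [hrH, sum_div, ← sum_add_distrib]
    refine sum_congr rfl fun k hk => ?_
    have hmbk := hhmb k hk
    have hPmk := hPm k hk
    have hPk := hP k hk
    exact logb_div_add_logb_mul_div (by positivity) (hhbm k hk).ne' (by positivity) hPk.ne'
      (by positivity)
  have hKpos : (0 : ℝ) < K := by exact_mod_cast hK
  have hcard : (#(Icc 1 K) : ℝ) = K := by simp
  have hequal := (strictConcaveOn_log_sub_log_affine hgb.le hNb).sum_lt_card_mul_of_sum_le
    (strictMonoOn_log_sub_log_affine hgb.le hNb) hPb (div_pos hPb_max hKpos)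
    (by rwa [hcard, mul_div_cancel₀ _ hKpos.ne']) hne
  rw [hsplit Pb hPb, hsplit _ fun _ _ => by positivity, sum_const, nsmul_eq_mul]
  gcongr
end

section
/- Fix c ∈ ℝ, positive mobile-station powers P_{m,k} > 0, and positive coefficients β_1,…,β_K with Σ_{k=1}^K β_k = 1. With P_{b,k} = β_k·P, the function P ↦ r_H is strictly increasing on (0, ∞). Moreover, for fixed total base-station power P > 0, r_H is strictly concave in each individual coefficient β_k > 0 (all other coefficients fixed). -/
/-!
Per channel, after splitting off constants, the rate is `logb 2 (p / (N + g p))` in the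
base-station power `p`. The map `p ↦ p / (N + g p)` is strictly increasing and concave on
`(0, ∞)`: its concavity defect at `s x + t y` is `s t N g (x - y)²` over positive
denominators. Composing with the strictly increasing, strictly concave `logb 2` gives strict
monotonicity in the total power and strict concavity in each coefficient `β k`, the other
summands being constant in `β k`.
-/

open Real Set

section LinearFractional

variable {N q : ℝ}

theorem strictMonoOn_div_add_mul (hN : 0 < N) (hq : 0 ≤ q) :
    StrictMonoOn (fun p : ℝ => p / (N + q * p)) (Ioi 0) := by
  intro x (hx : 0 < x) y (hy : 0 < y) hxy
  rw [div_lt_div_iff₀ (by positivity) (by positivity)]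
  nlinarith

theorem concaveOn_div_add_mul (hN : 0 < N) (hq : 0 ≤ q) :
    ConcaveOn ℝ (Ioi 0) (fun p : ℝ => p / (N + q * p)) := by
  refine ⟨convex_Ioi 0, fun x (hx : 0 < x) y (hy : 0 < y) s t hs ht hst => ?_⟩
  simp only [smul_eq_mul]
  obtain rfl : t = 1 - s := by linarith
  rw [mul_div_assoc', mul_div_assoc', div_add_div _ _ (by positivity) (by positivity),
    div_le_div_iff₀ (by positivity) (by positivity)]
  nlinarith [mul_nonneg (mul_nonneg (mul_nonneg hN.le hq) (mul_nonneg hs ht)) (sq_nonneg (x - y))]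

end LinearFractional

theorem strictConcaveOn_logb_Ioi {b : ℝ} (hb : 1 < b) : StrictConcaveOn ℝ (Ioi 0) (logb b) := by
  refine ⟨convex_Ioi 0, fun x hx y hy hxy s t hs ht hst => ?_⟩
  have hlog := strictConcaveOn_log_Ioi.2 hx hy hxy hs ht hst
  simp only [smul_eq_mul, logb] at hlog ⊢
  calc s * (log x / log b) + t * (log y / log b) = (s * log x + t * log y) / log b := by ring
    _ < log (s * x + t * y) / log b := div_lt_div_of_pos_right hlog (log_pos hb)

theorem strictConcaveOn_logb_div_add_mul {b N q : ℝ} (hb : 1 < b) (hN : 0 < N) (hq : 0 ≤ q) :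
    StrictConcaveOn ℝ (Ioi 0) (fun p : ℝ => logb b (p / (N + q * p))) := by
  refine ⟨convex_Ioi 0, fun x (hx : 0 < x) y (hy : 0 < y) hxy s t hs ht hst => ?_⟩
  have hφ := (concaveOn_div_add_mul hN hq).2 hx hy hs.le ht.le hst
  have hne : x / (N + q * x) ≠ y / (N + q * y) :=
    (strictMonoOn_div_add_mul hN hq).injOn.ne hx hy hxy
  calc s • logb b (x / (N + q * x)) + t • logb b (y / (N + q * y))
      < logb b (s • (x / (N + q * x)) + t • (y / (N + q * y))) :=
        (strictConcaveOn_logb_Ioi hb).2 (by simp only [mem_Ioi]; positivity)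
          (by simp only [mem_Ioi]; positivity) hne hs ht hst
    _ ≤ logb b ((s • x + t • y) / (N + q * (s • x + t • y))) :=
        logb_le_logb_of_le hb (by simp only [smul_eq_mul]; positivity) hφ

/-- The `k`-th summand of `r_H` as a function of `p = P_{b,k}`, with `A = h_mb,k P_{m,k}`,
`B = h_bm,k`, `N = N_b`, `g = g_b` and `D = N_m + g_m (k - c)² P_{m,k}`. -/
noncomputable def channelRate (A B N g D p : ℝ) : ℝ :=
  logb 2 (A / (N + g * p)) + logb 2 (B * p / D)

theorem channelRate_mul_right (A B N g D p t : ℝ) :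
    channelRate A B N g D (p * t) = channelRate A (B * t) N (g * t) D p := by
  simp only [channelRate]
  ring_nf

section ChannelRate

variable {A B N g D : ℝ}

theorem channelRate_eq (hA : 0 < A) (hB : 0 < B) (hN : 0 < N) (hg : 0 ≤ g) (hD : 0 < D)
    {p : ℝ} (hp : 0 < p) :
    channelRate A B N g D p = logb 2 (A * B / D) + logb 2 (p / (N + g * p)) := by
  have hden : 0 < N + g * p := by positivity
  rw [channelRate, ← logb_mul (by positivity) (by positivity),
    ← logb_mul (by positivity) (by positivity)]
  congr 1
  field_simp

theorem strictMonoOn_channelRate (hA : 0 < A) (hB : 0 < B) (hN : 0 < N) (hg : 0 ≤ g)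
    (hD : 0 < D) : StrictMonoOn (channelRate A B N g D) (Ioi 0) := by
  intro x (hx : 0 < x) y (hy : 0 < y) hxy
  rw [channelRate_eq hA hB hN hg hD hx, channelRate_eq hA hB hN hg hD hy, add_lt_add_iff_left]
  exact logb_lt_logb one_lt_two (by positivity) (strictMonoOn_div_add_mul hN hg hx hy hxy)

theorem strictConcaveOn_channelRate (hA : 0 < A) (hB : 0 < B) (hN : 0 < N) (hg : 0 ≤ g)
    (hD : 0 < D) : StrictConcaveOn ℝ (Ioi 0) (channelRate A B N g D) :=
  ((strictConcaveOn_logb_div_add_mul one_lt_two hN hg).add_const (logb 2 (A * B / D))).congr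
    fun _ hp => by rw [channelRate_eq hA hB hN hg hD hp, add_comm]; rfl

end ChannelRate

theorem stmt_15_general (K : ℕ) (hK : 1 ≤ K) (c : ℝ)
    (hmb hbm : ℕ → ℝ)
    (hhmb : ∀ k ∈ Finset.Icc 1 K, 0 < hmb k)
    (hhbm : ∀ k ∈ Finset.Icc 1 K, 0 < hbm k)
    (gb gm Nb Nm : ℝ)
    (hgb : 0 < gb) (hgm : 0 < gm) (hNb : 0 < Nb) (hNm : 0 < Nm)
    (Pm : ℕ → ℝ) (hPm : ∀ k ∈ Finset.Icc 1 K, 0 < Pm k)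
    (β : ℕ → ℝ) (hβ : ∀ k ∈ Finset.Icc 1 K, 0 < β k)
    (rH : (ℕ → ℝ) → ℝ)
    (hrH : ∀ Pb : ℕ → ℝ, rH Pb = ∑ k ∈ Finset.Icc 1 K,
      (Real.logb 2 (hmb k * Pm k / (Nb + gb * Pb k)) +
       Real.logb 2 (hbm k * Pb k / (Nm + gm * ((k : ℝ) - c) ^ 2 * Pm k)))) :
    StrictMonoOn (fun P : ℝ => rH (fun k => β k * P)) (Set.Ioi 0) ∧
    ∀ P : ℝ, 0 < P → ∀ k0 ∈ Finset.Icc 1 K,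
      StrictConcaveOn ℝ (Set.Ioi 0)
        (fun b : ℝ => rH (fun k => Function.update β k0 b k * P)) := by
  set D : ℕ → ℝ := fun k => Nm + gm * ((k : ℝ) - c) ^ 2 * Pm k
  have hD : ∀ k ∈ Finset.Icc 1 K, 0 < D k := fun k hk => by have := hPm k hk; positivity
  have hA : ∀ k ∈ Finset.Icc 1 K, 0 < hmb k * Pm k := fun k hk => mul_pos (hhmb k hk) (hPm k hk)
  have hrate : ∀ Pb : ℕ → ℝ,
      rH Pb = ∑ k ∈ Finset.Icc 1 K, channelRate (hmb k * Pm k) (hbm k) Nb gb (D k) (Pb k) := hrH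
  constructor
  · intro P (hP : 0 < P) Q _ hPQ
    simp only [hrate]
    refine Finset.sum_lt_sum_of_nonempty (Finset.nonempty_Icc.2 hK) fun k hk => ?_
    exact strictMonoOn_channelRate (hA k hk) (hhbm k hk) hNb hgb.le (hD k hk)
      (mul_pos (hβ k hk) hP) (mul_pos (hβ k hk) (hP.trans hPQ))
      (mul_lt_mul_of_pos_left hPQ (hβ k hk))
  · intro P hP k0 hk0
    set C := ∑ k ∈ (Finset.Icc 1 K).erase k0,
      channelRate (hmb k * Pm k) (hbm k) Nb gb (D k) (β k * P)
    refine ((strictConcaveOn_channelRate (hA k0 hk0) (mul_pos (hhbm k0 hk0) hP) hNb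
      (mul_pos hgb hP).le (hD k0 hk0)).add_const C).congr fun b _ => ?_
    have hrest : ∑ k ∈ (Finset.Icc 1 K).erase k0,
        channelRate (hmb k * Pm k) (hbm k) Nb gb (D k) (Function.update β k0 b k * P) = C :=
      Finset.sum_congr rfl fun k hk => by rw [Function.update_of_ne (Finset.ne_of_mem_erase hk)]
    rw [hrate, ← Finset.add_sum_erase _ _ hk0, hrest, Function.update_self, channelRate_mul_right]
    rfl

/-- High-SINR regime: with P_{b,k} = β_k·P, the sum rate is strictly
increasing in the total base-station power P, and for fixed P it is strictly
concave in each individual coefficient β_k. -/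
theorem stmt_15 (K : ℕ) (hK : 1 ≤ K) (c : ℝ)
    (hmb hbm : ℕ → ℝ)
    (hhmb : ∀ k ∈ Finset.Icc 1 K, 0 < hmb k)
    (hhbm : ∀ k ∈ Finset.Icc 1 K, 0 < hbm k)
    (gb gm Nb Nm : ℝ)
    (hgb : 0 < gb) (hgm : 0 < gm) (hNb : 0 < Nb) (hNm : 0 < Nm)
    (Pm : ℕ → ℝ) (hPm : ∀ k ∈ Finset.Icc 1 K, 0 < Pm k)
    (β : ℕ → ℝ) (hβ : ∀ k ∈ Finset.Icc 1 K, 0 < β k)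
    (hβsum : ∑ k ∈ Finset.Icc 1 K, β k = 1)
    (rH : (ℕ → ℝ) → ℝ)
    (hrH : ∀ Pb : ℕ → ℝ, rH Pb = ∑ k ∈ Finset.Icc 1 K,
      (Real.logb 2 (hmb k * Pm k / (Nb + gb * Pb k)) +
       Real.logb 2 (hbm k * Pb k / (Nm + gm * ((k : ℝ) - c) ^ 2 * Pm k)))) :
    StrictMonoOn (fun P : ℝ => rH (fun k => β k * P)) (Set.Ioi 0) ∧
    ∀ P : ℝ, 0 < P → ∀ k0 ∈ Finset.Icc 1 K,
      StrictConcaveOn ℝ (Set.Ioi 0)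
        (fun b : ℝ => rH (fun k => Function.update β k0 b k * P)) :=
  stmt_15_general K hK c hmb hbm hhmb hhbm gb gm Nb Nm hgb hgm hNb hNm Pm hPm β hβ rH hrH
end

section
/- Fix c ∈ ℝ with c ≠ K, positive base-station powers P_{b,k} > 0, and a total mobile-station power P_m > 0. Let R_k = g_m·(k − c)²·P_m for k ∈ {1,…,K}. If (α_1,…,α_K) with α_k > 0 and Σ_{k=1}^K α_k = 1 maximizes the high-SINR sum rate r_H with P_{m,k} = α_k·P_m, then for every k ≠ K: (i) if k = c (so R_k = 0), α_k = (1/α_K − 1/(N_m/R_K + α_K))⁻¹; (ii) if k ≠ c (so R_k > 0), α_k = (−N_m + √(N_m² + 4·α_K·(N_m + R_K·α_K)·R_k)) / (2·R_k). Equivalently, α_k·(N_m + R_k·α_k) = α_K·(N_m + R_K·α_K) for all k. -/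
/-!
The rate is a sum of one-variable functions of the fractions α_j. Shifting a mass t from α_K
to α_k stays feasible for small |t|, so at a maximiser the marginal rates of channels k and K
agree. The marginal rate of channel j is N_m / (α_j (N_m + R_j α_j) ln 2), which yields the
balance equation α_k (N_m + R_k α_k) = α_K (N_m + R_K α_K); (i) and (ii) solve it for α_k,
linearly when R_k = 0 and as the positive root of a quadratic otherwise.
-/

open Finset Filter

theorem eq_of_hasDerivAt_of_isMax_sum {ι : Type*} [DecidableEq ι] {s : Finset ι}
    {f : ι → ℝ → ℝ} {f' α : ι → ℝ} (hf : ∀ j ∈ s, HasDerivAt (f j) (f' j) (α j))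
    (hα : ∀ j ∈ s, 0 < α j)
    (hmax : ∀ β : ι → ℝ, (∀ j ∈ s, 0 < β j) → ∑ j ∈ s, β j = ∑ j ∈ s, α j →
      ∑ j ∈ s, f j (β j) ≤ ∑ j ∈ s, f j (α j))
    {i k : ι} (hi : i ∈ s) (hk : k ∈ s) : f' i = f' k := by
  set e : ι → ℝ := fun j => (if j = i then 1 else 0) - (if j = k then 1 else 0)
  have he_sum : ∑ j ∈ s, e j = 0 := by
    simp [e, sum_sub_distrib, hi, hk]
  have hderiv : HasDerivAt (fun t => ∑ j ∈ s, f j (α j + t * e j))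
      (∑ j ∈ s, f' j * e j) 0 := by
    refine HasDerivAt.fun_sum fun j hj => ?_
    have hline : HasDerivAt (fun t : ℝ => α j + t * e j) (e j) 0 := by
      simpa using ((hasDerivAt_id (0 : ℝ)).mul_const (e j)).const_add (α j)
    exact (hf j hj).comp_of_eq 0 hline (by simp)
  have hlocal : IsLocalMax (fun t => ∑ j ∈ s, f j (α j + t * e j)) 0 := by
    have hpos : ∀ᶠ t in nhds (0 : ℝ), ∀ j ∈ s, 0 < α j + t * e j :=
      (eventually_all_finset s).2 fun j hj =>
        (continuous_const.add (continuous_id.mul continuous_const)).continuousAt.eventually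
          (lt_mem_nhds (by simpa using hα j hj))
    filter_upwards [hpos] with t ht
    simpa using hmax _ ht (by simp [sum_add_distrib, ← mul_sum, he_sum])
  have hzero := hlocal.hasDerivAt_eq_zero hderiv
  simp only [e, mul_sub, mul_ite, mul_one, mul_zero, sum_sub_distrib, sum_ite_eq', hi, hk,
    if_true] at hzero
  linarith

theorem hasDerivAt_logb_mul_div_add_logb_div {a b d P N g x : ℝ} (ha : a ≠ 0) (hb : b ≠ 0)
    (hd : d ≠ 0) (hP : P ≠ 0) (hx : x ≠ 0) (hN : N + g * (x * P) ≠ 0) :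
    HasDerivAt (fun y => Real.logb 2 (a * (y * P) / b) + Real.logb 2 (d / (N + g * (y * P))))
      (N / (x * (N + g * (x * P)) * Real.log 2)) x := by
  have hsignal : HasDerivAt (fun y => a * (y * P) / b) (a * P / b) x := by
    simpa using (((hasDerivAt_id x).mul_const P).const_mul a).div_const b
  have hinterf : HasDerivAt (fun y => N + g * (y * P)) (g * P) x := by
    simpa using (((hasDerivAt_id x).mul_const P).const_mul g).const_add N
  have h1 := (hsignal.log (by positivity)).div_const (Real.log 2)
  have h2 := (((hasDerivAt_const x d).div hinterf hN).log (div_ne_zero hd hN)).div_const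
    (Real.log 2)
  refine (h1.fun_add h2).congr_deriv ?_
  have hlog : Real.log 2 ≠ 0 := by positivity
  simp only [Pi.div_apply]
  generalize hD : N + g * (x * P) = D at hN ⊢
  field_simp
  linear_combination -d * hD

theorem eq_inv_sub_inv_of_mul_eq {N R a x : ℝ} (hN : 0 < N) (hR : 0 < R) (ha : 0 < a)
    (h : x * N = a * (N + R * a)) : x = (1 / a - 1 / (N / R + a))⁻¹ := by
  have : N / R + a ≠ 0 := by positivity
  have : N + R * a ≠ 0 := by positivity
  field_simp
  rw [add_sub_cancel_right, eq_div_iff hN.ne']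
  linear_combination h

theorem eq_quadratic_root_of_mul_eq {N r x a b : ℝ} (hN : 0 < N) (hr : 0 < r) (hx : 0 < x)
    (h : x * (N + r * x) = a * b) : x = (-N + √(N ^ 2 + 4 * a * b * r)) / (2 * r) := by
  have hsq : N ^ 2 + 4 * a * b * r = (N + 2 * r * x) ^ 2 := by linear_combination -4 * r * h
  rw [hsq, Real.sqrt_sq (by positivity)]
  field_simp
  ring

/-- High-SINR regime: characterization of the optimal mobile-station power
fractions α_k for a fixed canceller position c ≠ K. -/
theorem stmt_16 (K : ℕ) (hK : 1 ≤ K) (c : ℝ) (hc : c ≠ (K : ℝ))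
    (hmb hbm : ℕ → ℝ)
    (hhmb : ∀ k ∈ Finset.Icc 1 K, 0 < hmb k)
    (hhbm : ∀ k ∈ Finset.Icc 1 K, 0 < hbm k)
    (gb gm Nb Nm : ℝ)
    (hgb : 0 < gb) (hgm : 0 < gm) (hNb : 0 < Nb) (hNm : 0 < Nm)
    (Pb : ℕ → ℝ) (hPb : ∀ k ∈ Finset.Icc 1 K, 0 < Pb k)
    (Pm : ℝ) (hPm : 0 < Pm)
    (R : ℕ → ℝ) (hR : ∀ k : ℕ, R k = gm * ((k : ℝ) - c) ^ 2 * Pm)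
    (rH : (ℕ → ℝ) → ℝ)
    (hrH : ∀ α : ℕ → ℝ, rH α = ∑ k ∈ Finset.Icc 1 K,
      (Real.logb 2 (hmb k * (α k * Pm) / (Nb + gb * Pb k)) +
       Real.logb 2 (hbm k * Pb k / (Nm + gm * ((k : ℝ) - c) ^ 2 * (α k * Pm)))))
    (α : ℕ → ℝ) (hα : ∀ k ∈ Finset.Icc 1 K, 0 < α k)
    (hαsum : ∑ k ∈ Finset.Icc 1 K, α k = 1)
    (hmax : ∀ α' : ℕ → ℝ, (∀ k ∈ Finset.Icc 1 K, 0 < α' k) →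
      (∑ k ∈ Finset.Icc 1 K, α' k = 1) → rH α' ≤ rH α) :
    (∀ k ∈ Finset.Icc 1 K, k ≠ K →
      (((k : ℝ) = c → α k = (1 / α K - 1 / (Nm / R K + α K))⁻¹) ∧
       ((k : ℝ) ≠ c → α k =
        (-Nm + Real.sqrt (Nm ^ 2 + 4 * α K * (Nm + R K * α K) * R k)) /
          (2 * R k)))) ∧
    (∀ k ∈ Finset.Icc 1 K, α k * (Nm + R k * α k) = α K * (Nm + R K * α K)) := by
  have hKmem : K ∈ Icc 1 K := mem_Icc.mpr ⟨hK, le_rfl⟩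
  have hRK : 0 < R K := by
    have := sub_ne_zero.mpr hc.symm
    rw [hR]; positivity
  have balance : ∀ k ∈ Icc 1 K, α k * (Nm + R k * α k) = α K * (Nm + R K * α K) := by
    intro k hk
    have hderiv : ∀ j ∈ Icc 1 K, HasDerivAt
        (fun x => Real.logb 2 (hmb j * (x * Pm) / (Nb + gb * Pb j)) +
          Real.logb 2 (hbm j * Pb j / (Nm + gm * ((j : ℝ) - c) ^ 2 * (x * Pm))))
        (Nm / (α j * (Nm + gm * ((j : ℝ) - c) ^ 2 * (α j * Pm)) * Real.log 2)) (α j) :=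
      fun j hj => by
        have := hα j hj; have := hPb j hj; have := hhmb j hj; have := hhbm j hj
        exact hasDerivAt_logb_mul_div_add_logb_div (by positivity) (by positivity)
          (by positivity) hPm.ne' (by positivity) (by positivity)
    have hstationary := eq_of_hasDerivAt_of_isMax_sum hderiv hα
      (fun β hβ hβsum => by simpa only [hrH] using hmax β hβ (hβsum.trans hαsum)) hk hKmem
    have hRα : ∀ j : ℕ, gm * ((j : ℝ) - c) ^ 2 * (α j * Pm) = R j * α j := fun j => by
      rw [hR]; ring
    rw [hRα, hRα] at hstationary
    have hαk := hα k hk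
    have hαK := hα K hKmem
    have hRk : 0 ≤ R k := by rw [hR]; positivity
    have hlog : 0 < Real.log 2 := Real.log_pos one_lt_two
    field_simp at hstationary
    linear_combination -hstationary
  refine ⟨fun k hk _ => ⟨fun hkc => ?_, fun hkc => ?_⟩, balance⟩
  · have hRk : R k = 0 := by rw [hR, hkc]; ring
    exact eq_inv_sub_inv_of_mul_eq hNm hRK (hα K hKmem) (by simpa [hRk] using balance k hk)
  · have hRk : 0 < R k := by
      have := sub_ne_zero.mpr hkc
      rw [hR]; positivity
    exact eq_quadratic_root_of_mul_eq hNm hRk (hα k hk) (balance k hk)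
end

section
/- Let γ > 0 and A > 0 be reals, and define α : [0, ∞) → ℝ by α(0) = A and α(Δ) = (−1 + √(1 + 4·A·γ·Δ)) / (2·γ·Δ) for Δ > 0. Then α is strictly decreasing on [0, ∞); in particular, for the optimal high-SINR mobile-station power allocation α_k (whose value on channel k depends on the distance to the canceller position c only through Δ = (k − c)², with A = α_K·(1 + α_K·γ·(K − c)²)), |i − c| < |j − c| implies α_i > α_j. -/
/-- The optimal high-SINR power fraction, viewed as a function of the squared
distance Δ to the canceller position, is strictly decreasing on [0, ∞); in
particular channels closer to the canceller position get more power. -/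
theorem stmt_19 (γ A : ℝ) (hγ : 0 < γ) (hA : 0 < A)
    (α : ℝ → ℝ) (hα0 : α 0 = A)
    (hα : ∀ Δ : ℝ, 0 < Δ →
      α Δ = (-1 + Real.sqrt (1 + 4 * A * γ * Δ)) / (2 * γ * Δ)) :
    StrictAntiOn α (Set.Ici 0) ∧
    ∀ i j c : ℝ, |i - c| < |j - c| → α ((j - c) ^ 2) < α ((i - c) ^ 2) := by
  have key : ∀ Δ : ℝ, 0 ≤ Δ →
      α Δ = 2 * A / (1 + Real.sqrt (1 + 4 * A * γ * Δ)) := by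
    intro Δ hΔ
    rcases eq_or_lt_of_le hΔ with h | h
    · subst h
      simp [hα0.symm ▸ hα0, Real.sqrt_one]
      rw [hα0]; ring
    · rw [hα Δ h]
      have harg : (0:ℝ) ≤ 1 + 4 * A * γ * Δ := by positivity
      set s := Real.sqrt (1 + 4 * A * γ * Δ) with hs
      have hs2 : s ^ 2 = 1 + 4 * A * γ * Δ := Real.sq_sqrt harg
      have hspos : 0 < s := Real.sqrt_pos.mpr (by positivity)
      have hd1 : (2 * γ * Δ) ≠ 0 := by positivity
      have hd2 : (1 + s) ≠ 0 := by positivity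
      field_simp
      nlinarith [hs2]
  have mono : StrictAntiOn α (Set.Ici 0) := by
    intro x hx y hy hxy
    rw [key x hx, key y hy]
    have h1 : (0:ℝ) < 1 + Real.sqrt (1 + 4 * A * γ * x) := by positivity
    have hx' : (0:ℝ) ≤ x := hx
    have h2 : Real.sqrt (1 + 4 * A * γ * x) < Real.sqrt (1 + 4 * A * γ * y) := by
      apply Real.sqrt_lt_sqrt (by positivity)
      nlinarith [mul_lt_mul_of_pos_left hxy (by positivity : (0:ℝ) < 4 * A * γ)]
    exact div_lt_div_of_pos_left (by linarith) h1 (by linarith)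
  refine ⟨mono, fun i j c h => ?_⟩
  have hsq : (i - c) ^ 2 < (j - c) ^ 2 := by
    rw [← sq_abs (i - c), ← sq_abs (j - c)]
    exact pow_lt_pow_left₀ h (abs_nonneg _) two_ne_zero
  exact mono (Set.mem_Ici.mpr (sq_nonneg _)) (Set.mem_Ici.mpr (sq_nonneg _)) hsq
end
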